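/- arXiv:1203.6086 — 9 statements merged into one kernel-verified Lean document; each statement's English description precedes it below -/
import Mathlib

section
/- Let B be a countable weakly oligomorphic relational structure and let A be a countable structure over the same relational signature. Then the following are equivalent: (1) there exists a homomorphism from A to B; (2) every finite substructure of A admits a homomorphism into B (i.e. Age(A) → Age(B)); (3) CSP(A) ⊆ CSP(B), i.e. every finite structure admitting a homomorphism into A also admits a homomorphism into B. -/
/-!
Enumerate `A` as `a₀, a₁, …` and let `Q(n, m) ⊆ Bⁿ` (`prefixImages`) be the set of images of
`(a₀, …, aₙ₋₁)` under homomorphisms into `B` of the substructure on `{a₀, …, aₙ₊ₘ₋₁}`. Each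
`Q(n, m)` is invariant under `End(B)` and decreasing in `m`, so weak oligomorphicity makes it
stabilise at a nonempty relation `R(n)`. Every tuple of `R(n)` extends to one of `R(n + 1)`, and a
branch through the `R(n)` is a homomorphism `A → B`.
-/

open FirstOrder Language CategoryTheory

universe u v

namespace Stmt0

/-- A relation invariant under all endomorphisms of `M`. -/
def EndInvariant (L : FirstOrder.Language.{u, v}) (M : Type*) [L.Structure M] {n : ℕ}
    (ρ : Set (Fin n → M)) : Prop :=
  ∀ f : M →[L] M, ∀ x ∈ ρ, (⇑f ∘ x) ∈ ρ

/-- A structure is weakly oligomorphic if for every arity there are only finitely many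
relations invariant under its endomorphism monoid. -/
def WeaklyOligomorphic (L : FirstOrder.Language.{u, v}) (M : Type*) [L.Structure M] : Prop :=
  ∀ n : ℕ, {ρ : Set (Fin n → M) | EndInvariant L M ρ}.Finite

theorem _root_.Antitone.exists_forall_le_of_finite_range {α : Type*} [PartialOrder α]
    {s : ℕ → α} (hs : Antitone s) (hfin : (Set.range s).Finite) : ∃ M, ∀ m, s M ≤ s m := by
  obtain ⟨M, -, hM⟩ := Set.Finite.exists_minimalFor' s Set.univ (by simpa using hfin)
    ⟨0, trivial⟩
  refine ⟨M, fun m => ?_⟩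
  have hle : s (max M m) ≤ s M := hs (le_max_left M m)
  exact (hM trivial hle).trans (hs (le_max_right M m))

theorem exists_seq_forall_mem_of_extend {α : Type*} {R : ∀ n, Set (Fin n → α)}
    (h0 : (R 0).Nonempty) (hstep : ∀ n, ∀ x ∈ R n, ∃ y ∈ R (n + 1), Fin.init y = x) :
    ∃ g : ℕ → α, ∀ n, (fun i : Fin n => g i) ∈ R n := by
  choose step step_mem step_init using hstep
  let c : ∀ n, R n := fun n => Nat.rec ⟨h0.some, h0.some_mem⟩
    (fun n x => ⟨step n x.1 x.2, step_mem n x.1 x.2⟩) n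
  let g : ℕ → α := fun k => (c (k + 1)).1 (Fin.last k)
  suffices ∀ n, (c n).1 = fun i : Fin n => g i from ⟨g, fun n => this n ▸ (c n).2⟩
  intro n
  induction n with
  | zero => exact Subsingleton.elim _ _
  | succ n ih =>
    funext i
    refine Fin.lastCases rfl (fun j => ?_) i
    exact (congrFun (step_init n _ _) j).trans (congrFun ih j)

variable {L : FirstOrder.Language.{u, v}} {A B : Type*} [L.Structure A] [L.Structure B]

theorem nonempty_hom_of_forall_restrict [L.IsRelational] {S : ℕ → L.Substructure A}
    (hS : Monotone S) (hcover : ∀ x, ∃ n, x ∈ S n) (f : A → B)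
    (hf : ∀ n, ∃ h : S n →[L] B, ∀ x : S n, h x = f x) : Nonempty (A →[L] B) := by
  refine ⟨⟨f, fun {_} g => isEmptyElim g, fun {k} r t ht => ?_⟩⟩
  choose N hN using fun i => hcover (t i)
  obtain ⟨n, hn⟩ := Finite.exists_le N
  obtain ⟨h, hhf⟩ := hf n
  let t' : Fin k → S n := fun i => ⟨t i, hS (hn i) (hN i)⟩
  have : f ∘ t = h ∘ t' := funext fun i => (hhf (t' i)).symm
  exact this ▸ h.map_rel r t' ht

variable (L) in
def prefixSubstructure (a : ℕ → A) (k : ℕ) : L.Substructure A :=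
  Substructure.closure L (a '' Set.Iio k)

theorem apply_mem_prefixSubstructure (a : ℕ → A) {i k : ℕ} (hi : i < k) :
    a i ∈ prefixSubstructure L a k :=
  Substructure.subset_closure ⟨i, hi, rfl⟩

theorem prefixSubstructure_mono (a : ℕ → A) : Monotone (prefixSubstructure L a) :=
  fun _ _ h => Substructure.closure_mono (Set.image_mono (Set.Iio_subset_Iio h))

variable (L B) in
def prefixImages (a : ℕ → A) (n m : ℕ) : Set (Fin n → B) :=
  Set.range fun h : prefixSubstructure L a (n + m) →[L] B =>
    fun i : Fin n => h ⟨a i, apply_mem_prefixSubstructure a (by omega)⟩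

theorem restrict_mem_prefixImages (a : ℕ → A) {n m k : ℕ}
    (h : prefixSubstructure L a k →[L] B) (hk : n + m ≤ k) :
    (fun i : Fin n => h ⟨a i, apply_mem_prefixSubstructure a (by omega)⟩) ∈
      prefixImages L B a n m :=
  ⟨h.comp (Substructure.inclusion (prefixSubstructure_mono a hk)).toHom, rfl⟩

theorem prefixImages_antitone (a : ℕ → A) (n : ℕ) : Antitone (prefixImages L B a n) := by
  rintro m m' hm _ ⟨h, rfl⟩
  exact restrict_mem_prefixImages a h (by omega)

theorem endInvariant_prefixImages (a : ℕ → A) (n m : ℕ) :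
    EndInvariant L B (prefixImages L B a n m) := by
  rintro f _ ⟨h, rfl⟩
  exact ⟨f.comp h, rfl⟩

theorem prefixImages_nonempty (a : ℕ → A) (n m : ℕ)
    (hfin : ∀ k, Nonempty (prefixSubstructure L a k →[L] B)) :
    (prefixImages L B a n m).Nonempty :=
  let ⟨h⟩ := hfin (n + m)
  ⟨_, restrict_mem_prefixImages a h le_rfl⟩

theorem exists_prefixImages_subset (hB : WeaklyOligomorphic L B) (a : ℕ → A) (n : ℕ) :
    ∃ M, ∀ m, prefixImages L B a n M ⊆ prefixImages L B a n m :=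
  (prefixImages_antitone a n).exists_forall_le_of_finite_range <|
    (hB n).subset <| Set.range_subset_iff.2 (endInvariant_prefixImages a n)

theorem exists_init_eq_of_mem_iInter_prefixImages (hB : WeaklyOligomorphic L B) (a : ℕ → A)
    {n : ℕ} {x : Fin n → B} (hx : x ∈ ⋂ m, prefixImages L B a n m) :
    ∃ y ∈ ⋂ m, prefixImages L B a (n + 1) m, Fin.init y = x := by
  obtain ⟨M, hM⟩ := exists_prefixImages_subset hB a (n + 1)
  obtain ⟨h, rfl⟩ := Set.mem_iInter.1 hx (M + 1)
  have hy := restrict_mem_prefixImages (n := n + 1) (m := M) a h (by omega)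
  exact ⟨_, Set.mem_iInter.2 fun m => hM m hy, rfl⟩

theorem iInter_prefixImages_nonempty (hB : WeaklyOligomorphic L B) (a : ℕ → A) (n : ℕ)
    (hfin : ∀ k, Nonempty (prefixSubstructure L a k →[L] B)) :
    (⋂ m, prefixImages L B a n m).Nonempty := by
  obtain ⟨M, hM⟩ := exists_prefixImages_subset hB a n
  obtain ⟨x, hx⟩ := prefixImages_nonempty a n M hfin
  exact ⟨x, Set.mem_iInter.2 fun m => hM m hx⟩

theorem nonempty_hom_of_forall_prefix_mem [L.IsRelational] {a : ℕ → A}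
    (ha : Function.Surjective a) (g : ℕ → B)
    (hg : ∀ n, (fun i : Fin n => g i) ∈ prefixImages L B a n 0) : Nonempty (A →[L] B) := by
  classical
  refine nonempty_hom_of_forall_restrict (prefixSubstructure_mono a)
    (fun x => ?_) (fun x => g (Nat.find (ha x))) fun n => ?_
  · obtain ⟨i, rfl⟩ := ha x
    exact ⟨i + 1, apply_mem_prefixSubstructure a i.lt_succ_self⟩
  obtain ⟨h, hh⟩ := hg n
  refine ⟨h, fun ⟨x, hx⟩ => ?_⟩
  -- the least index of an element of the `n`-th prefix is below `n`
  obtain ⟨j, hj, rfl⟩ := (Substructure.mem_closure_iff_of_isRelational L _ _).1 hx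
  have hfind : Nat.find (ha (a j)) < n := (Nat.find_min' (ha (a j)) rfl).trans_lt hj
  calc h ⟨a j, hx⟩ = h ⟨a (Nat.find (ha (a j))), apply_mem_prefixSubstructure a hfind⟩ :=
        congrArg h (Subtype.ext (Nat.find_spec (ha (a j))).symm)
    _ = g (Nat.find (ha (a j))) := congrFun hh ⟨_, hfind⟩

theorem nonempty_hom_of_forall_fg [L.IsRelational] [Countable A] (hB : WeaklyOligomorphic L B)
    (hfg : ∀ S : L.Substructure A, S.FG → Nonempty (S →[L] B)) : Nonempty (A →[L] B) := by
  cases isEmpty_or_nonempty A with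
  | inl hA =>
    -- the empty map need not be a homomorphism: nullary relations of `A` must hold in `B`
    obtain ⟨h⟩ := hfg ⊤ (Substructure.fg_iff_finite.2 inferInstance)
    exact ⟨h.comp Substructure.topEquiv.symm.toHom⟩
  | inr hA =>
    obtain ⟨a, ha⟩ := exists_surjective_nat A
    have hfin (k : ℕ) : Nonempty (prefixSubstructure L a k →[L] B) :=
      hfg _ (Substructure.fg_closure ((Set.finite_Iio k).image a))
    obtain ⟨g, hg⟩ := exists_seq_forall_mem_of_extend (iInter_prefixImages_nonempty hB a 0 hfin)
      fun n x hx => exists_init_eq_of_mem_iInter_prefixImages hB a hx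
    exact nonempty_hom_of_forall_prefix_mem ha g fun n => Set.mem_iInter.1 (hg n) 0

theorem hom_iff_age_iff_csp_general (L : FirstOrder.Language.{u, v}) [L.IsRelational]
    (A B : Type) [L.Structure A] [L.Structure B] [Countable A]
    (hB : WeaklyOligomorphic L B) :
    (Nonempty (A →[L] B) ↔
      ∀ C : Bundled.{0} L.Structure, Finite C → Nonempty (C ↪[L] A) → Nonempty (C →[L] B)) ∧
    (Nonempty (A →[L] B) ↔
      ∀ C : Bundled.{0} L.Structure, Finite C → Nonempty (C →[L] A) → Nonempty (C →[L] B)) := by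
  have of_age (hAge : ∀ C : Bundled.{0} L.Structure, Finite C → Nonempty (C ↪[L] A) →
      Nonempty (C →[L] B)) : Nonempty (A →[L] B) :=
    nonempty_hom_of_forall_fg hB fun S hS =>
      hAge ⟨S, inferInstance⟩ (Substructure.fg_iff_finite.1 hS) ⟨S.subtype⟩
  refine ⟨⟨fun ⟨f⟩ C _ ⟨e⟩ => ⟨f.comp e.toHom⟩, of_age⟩, ⟨fun ⟨f⟩ C _ ⟨g⟩ => ⟨f.comp g⟩, ?_⟩⟩
  exact fun hCsp => of_age fun C hC ⟨e⟩ => hCsp C hC ⟨e.toHom⟩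

/-- For a countable weakly oligomorphic structure `B` and a countable
structure `A` over the same relational signature, the existence of a homomorphism
`A → B` is equivalent to `Age(A) → Age(B)` and to `CSP(A) ⊆ CSP(B)`. -/
theorem hom_iff_age_iff_csp (L : FirstOrder.Language.{u, v}) [L.IsRelational]
    (A B : Type) [L.Structure A] [L.Structure B] [Countable A] [Countable B]
    (hB : WeaklyOligomorphic L B) :
    (Nonempty (A →[L] B) ↔
      ∀ C : Bundled.{0} L.Structure, Finite C → Nonempty (C ↪[L] A) → Nonempty (C →[L] B)) ∧
    (Nonempty (A →[L] B) ↔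
      ∀ C : Bundled.{0} L.Structure, Finite C → Nonempty (C →[L] A) → Nonempty (C →[L] B)) :=
  hom_iff_age_iff_csp_general L A B hB

end Stmt0
end

section
/- Let M be a countable weakly oligomorphic relational structure, and let N₁ and N₂ be countable structures over the same signature, each elementarily equivalent to M (i.e. each a model of the complete first-order theory of M). Then N₁ and N₂ are homomorphism-equivalent: there exist homomorphisms N₁ → N₂ and N₂ → N₁. -/
/-!
For a tuple `a` of `N₁`, the relations on `M` defined by positive existential formulas true of
`a` are invariant under `End(M)`, hence finitely many; a minimal one is defined by a single such
formula `Φ`, which implies in `M`, hence in `N₂`, every positive existential formula true of `a`.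
So if every positive existential formula true of `a` holds of a tuple `b` of `N₂`, a witness `c`
of `∃ y, Φ (b, y)` extends this property to `(a, x)` and `(b, c)`. Starting from the empty tuples
(elementary equivalence) and running through an enumeration of `N₁` yields a map preserving all
atomic formulas, that is, a homomorphism.
-/

open FirstOrder Language CategoryTheory

universe u v

namespace Stmt1

/-- A relation invariant under all endomorphisms of `M`. -/
def EndInvariant (L : FirstOrder.Language.{u, v}) (M : Type*) [L.Structure M] {n : ℕ}
    (ρ : Set (Fin n → M)) : Prop :=
  ∀ f : M →[L] M, ∀ x ∈ ρ, (⇑f ∘ x) ∈ ρ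

/-- A structure is weakly oligomorphic if for every arity there are only finitely many
relations invariant under its endomorphism monoid. -/
def WeaklyOligomorphic (L : FirstOrder.Language.{u, v}) (M : Type*) [L.Structure M] : Prop :=
  ∀ n : ℕ, {ρ : Set (Fin n → M) | EndInvariant L M ρ}.Finite

end Stmt1

theorem Nat.exists_seq_forall_prefix {β : Type*} (P : (n : ℕ) → (Fin n → β) → Prop)
    (h₀ : P 0 Fin.elim0) (hsnoc : ∀ n b, P n b → ∃ c, P (n + 1) (Fin.snoc b c)) :
    ∃ v : ℕ → β, ∀ n, P n fun i => v i := by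
  choose next hnext using hsnoc
  let w : (n : ℕ) → {b : Fin n → β // P n b} := fun n =>
    Nat.rec ⟨Fin.elim0, h₀⟩ (fun n b => ⟨Fin.snoc b.1 (next n b.1 b.2), hnext n b.1 b.2⟩) n
  refine ⟨fun n => next n (w n).1 (w n).2, fun n => ?_⟩
  suffices hprefix : (fun i : Fin n => next i (w i).1 (w i).2) = (w n).1 by
    rw [hprefix]; exact (w n).2
  induction n with
  | zero => exact funext fun i => i.elim0
  | succ n ih =>
    funext i
    refine Fin.lastCases ?_ (fun j => ?_) i
    · exact (Fin.snoc_last (α := fun _ => β) _ _).symm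
    · exact (congrFun ih j).trans (Fin.snoc_castSucc (α := fun _ => β) _ _ _).symm

namespace FirstOrder.Language

variable {L : Language.{u, v}} {α : Type*} {A B : Type*} [L.Structure A] [L.Structure B]

namespace BoundedFormula

inductive IsPosExistential : ∀ {n}, L.BoundedFormula α n → Prop
  | of_isAtomic {n} {φ : L.BoundedFormula α n} (h : φ.IsAtomic) : IsPosExistential φ
  | top {n} : IsPosExistential (⊤ : L.BoundedFormula α n)
  | inf {n} {φ ψ : L.BoundedFormula α n} :
      IsPosExistential φ → IsPosExistential ψ → IsPosExistential (φ ⊓ ψ)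
  | ex {n} {φ : L.BoundedFormula α (n + 1)} : IsPosExistential φ → IsPosExistential φ.ex

variable {F : Type*} [FunLike F A B] [L.HomClass F A B]

theorem IsAtomic.realize_hom {n} {φ : L.BoundedFormula α n} (hφ : φ.IsAtomic) (f : F)
    {v : α → A} {xs : Fin n → A} : φ.Realize v xs → φ.Realize (f ∘ v) (f ∘ xs) := by
  induction hφ with
  | equal t₁ t₂ =>
    simp only [realize_bdEqual, ← Sum.comp_elim, HomClass.realize_term]
    exact congrArg f
  | rel R ts =>
    simp only [realize_rel, ← Sum.comp_elim, HomClass.realize_term]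
    exact HomClass.map_rel f R _

theorem IsPosExistential.realize_hom {n} {φ : L.BoundedFormula α n} (hφ : φ.IsPosExistential)
    (f : F) {v : α → A} {xs : Fin n → A} : φ.Realize v xs → φ.Realize (f ∘ v) (f ∘ xs) := by
  induction hφ with
  | of_isAtomic h => exact h.realize_hom f
  | top => simp
  | inf _ _ ih₁ ih₂ =>
    simp only [realize_inf]
    exact And.imp ih₁ ih₂
  | ex _ ih =>
    simp only [realize_ex]
    rintro ⟨a, ha⟩
    exact ⟨f a, by simpa only [Fin.comp_snoc] using ih ha⟩

end BoundedFormula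

theorem ElementarilyEquivalent.forall_realize_imp (h : A ≅[L] B) {n}
    {φ ψ : L.BoundedFormula Empty n}
    (hφψ : ∀ x : Fin n → A, φ.Realize default x → ψ.Realize default x) (y : Fin n → B) :
    φ.Realize default y → ψ.Realize default y := by
  have hA : A ⊨ (φ.imp ψ).alls := by
    simpa only [Sentence.Realize, BoundedFormula.realize_alls, BoundedFormula.realize_imp]
  have hB := (h.realize_sentence _).1 hA
  simp only [Sentence.Realize, BoundedFormula.realize_alls, BoundedFormula.realize_imp] at hB
  exact hB y

variable (L) in
def PosExistentialTypeLE {n} (a : Fin n → A) (b : Fin n → B) : Prop :=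
  ∀ φ : L.BoundedFormula Empty n, φ.IsPosExistential →
    φ.Realize default a → φ.Realize default b

theorem ElementarilyEquivalent.posExistentialTypeLE_elim0 (h : A ≅[L] B) (a : Fin 0 → A)
    (b : Fin 0 → B) : L.PosExistentialTypeLE a b := by
  intro φ _ hφ
  rw [Subsingleton.elim a default] at hφ
  rw [Subsingleton.elim b default]
  exact (h.realize_sentence φ).1 hφ

open BoundedFormula Term in
theorem nonempty_hom_of_posExistentialTypeLE (F : A → B)
    (hF : ∀ k (x : Fin k → A), ∃ m, ∃ σ : Fin k → Fin m, ∃ a : Fin m → A, ∃ b : Fin m → B,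
      L.PosExistentialTypeLE a b ∧ a ∘ σ = x ∧ b ∘ σ = F ∘ x) :
    Nonempty (A →[L] B) := by
  refine ⟨{ toFun := F, map_fun' := ?_, map_rel' := ?_ }⟩
  · intro k f x
    obtain ⟨m, σ, a, b, hab, ha, hb⟩ := hF (k + 1) (Fin.snoc x (Structure.funMap f x))
    have key := hab ((func f fun i => var (Sum.inr (σ i.castSucc))).bdEqual
      (var (Sum.inr (σ (Fin.last k))))) (.of_isAtomic (.equal _ _))
    have hai (i) : a (σ i) = Fin.snoc (α := fun _ => A) x (Structure.funMap f x) i :=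
      congrFun ha i
    have hbi (i) : b (σ i) = F (Fin.snoc (α := fun _ => A) x (Structure.funMap f x) i) :=
      congrFun hb i
    simp only [realize_bdEqual, realize_func, realize_var, Sum.elim_inr, hai, hbi,
      Fin.snoc_castSucc, Fin.snoc_last] at key
    exact (key trivial).symm
  · intro k r x hx
    obtain ⟨m, σ, a, b, hab, rfl, hb⟩ := hF k x
    have key := hab (r.boundedFormula fun i => var (Sum.inr (σ i))) (.of_isAtomic (.rel _ _))
    simp only [realize_rel, realize_var, Sum.elim_inr] at key
    rw [← hb]
    exact key hx

theorem ElementarilyEquivalent.nonempty_hom_of_isEmpty [IsEmpty A] (h : A ≅[L] B) :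
    Nonempty (A →[L] B) :=
  nonempty_hom_of_posExistentialTypeLE isEmptyElim fun
    | 0, x => ⟨0, id, x, isEmptyElim ∘ x, h.posExistentialTypeLE_elim0 _ _, rfl, rfl⟩
    | _ + 1, x => isEmptyElim (x 0)

theorem nonempty_hom_of_surjective_seq {u : ℕ → A} (hu : u.Surjective) {v : ℕ → B}
    (huv : ∀ n, L.PosExistentialTypeLE (fun i : Fin n => u i) (fun i => v i)) :
    Nonempty (A →[L] B) :=
  nonempty_hom_of_posExistentialTypeLE (v ∘ Function.surjInv hu) fun _ x => by
    obtain ⟨m, hm⟩ := (Set.finite_range fun i => Function.surjInv hu (x i)).bddAbove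
    exact ⟨m + 1, fun i => ⟨Function.surjInv hu (x i), Nat.lt_succ_of_le (hm ⟨i, rfl⟩)⟩, _, _,
      huv (m + 1), funext fun i => Function.surjInv_eq hu (x i), rfl⟩

end FirstOrder.Language

namespace Stmt1

variable {L : FirstOrder.Language.{u, v}} {M A B : Type*}
  [L.Structure M] [L.Structure A] [L.Structure B]

theorem endInvariant_setOf_realize {n} {φ : L.BoundedFormula Empty n}
    (hφ : φ.IsPosExistential) : EndInvariant L M {x | φ.Realize default x} := fun f x hx => by
  simpa only [Set.mem_ofPred_eq, Subsingleton.elim (f ∘ default) default] using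
    hφ.realize_hom f hx

theorem WeaklyOligomorphic.exists_isPosExistential_generator (hM : WeaklyOligomorphic L M)
    {n} (a : Fin n → A) :
    ∃ Φ : L.BoundedFormula Empty n, Φ.IsPosExistential ∧ Φ.Realize default a ∧
      ∀ ψ : L.BoundedFormula Empty n, ψ.IsPosExistential → ψ.Realize default a →
        ∀ x : Fin n → M, Φ.Realize default x → ψ.Realize default x := by
  let S := {φ : L.BoundedFormula Empty n | φ.IsPosExistential ∧ φ.Realize default a}
  let definedBy (φ : L.BoundedFormula Empty n) : Set (Fin n → M) := {x | φ.Realize default x}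
  have hfin : (definedBy '' S).Finite :=
    (hM n).subset (by rintro _ ⟨φ, hφ, rfl⟩; exact endInvariant_setOf_realize hφ.1)
  obtain ⟨Φ, ⟨hΦ, hΦa⟩, hmin⟩ :=
    Set.Finite.exists_minimalFor' definedBy S hfin ⟨⊤, .top, by simp⟩
  refine ⟨Φ, hΦ, hΦa, fun ψ hψ hψa x hx => ?_⟩
  have hinf : Φ ⊓ ψ ∈ S := ⟨hΦ.inf hψ, BoundedFormula.realize_inf.2 ⟨hΦa, hψa⟩⟩
  have hle : definedBy (Φ ⊓ ψ) ⊆ definedBy Φ := fun y hy => (BoundedFormula.realize_inf.1 hy).1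
  exact (BoundedFormula.realize_inf.1 (hmin hinf hle hx)).2

theorem WeaklyOligomorphic.exists_posExistentialTypeLE_snoc (hM : WeaklyOligomorphic L M)
    (hB : M ≅[L] B) {n} {a : Fin n → A} {b : Fin n → B} (hab : L.PosExistentialTypeLE a b)
    (x : A) : ∃ c, L.PosExistentialTypeLE (Fin.snoc a x) (Fin.snoc b c) := by
  obtain ⟨Φ, hΦ, hΦa, hΦψ⟩ := hM.exists_isPosExistential_generator (Fin.snoc a x)
  obtain ⟨c, hc⟩ :=
    BoundedFormula.realize_ex.1 (hab _ hΦ.ex (BoundedFormula.realize_ex.2 ⟨x, hΦa⟩))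
  exact ⟨c, fun ψ hψ hψa => hB.forall_realize_imp (hΦψ ψ hψ hψa) _ hc⟩

theorem WeaklyOligomorphic.nonempty_hom (hM : WeaklyOligomorphic L M) [Countable A]
    (hA : M ≅[L] A) (hB : M ≅[L] B) : Nonempty (A →[L] B) := by
  rcases isEmpty_or_nonempty A with _ | _
  · exact (hA.symm.trans hB).nonempty_hom_of_isEmpty
  obtain ⟨u, hu⟩ := exists_surjective_nat A
  have hprefix (n : ℕ) : (fun i : Fin (n + 1) => u i) = Fin.snoc (fun i : Fin n => u i) (u n) :=
    funext (Fin.lastCases (by simp) (by simp))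
  obtain ⟨v, hv⟩ := Nat.exists_seq_forall_prefix
    (fun n b => L.PosExistentialTypeLE (fun i : Fin n => u i) b)
    ((hA.symm.trans hB).posExistentialTypeLE_elim0 _ _)
    fun n b hb => by simpa only [hprefix] using hM.exists_posExistentialTypeLE_snoc hB hb (u n)
  exact nonempty_hom_of_surjective_seq hu hv

theorem models_homEquiv_general (L : FirstOrder.Language.{u, v})
    (M N₁ N₂ : Type) [L.Structure M] [L.Structure N₁] [L.Structure N₂]
    [Countable N₁] [Countable N₂]
    (hM : WeaklyOligomorphic L M)
    (h₁ : M ≅[L] N₁) (h₂ : M ≅[L] N₂) :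
    Nonempty (N₁ →[L] N₂) ∧ Nonempty (N₂ →[L] N₁) :=
  ⟨hM.nonempty_hom h₁ h₂, hM.nonempty_hom h₂ h₁⟩

/-- Any two countable models of the complete first-order theory of a
countable weakly oligomorphic structure are homomorphism-equivalent. -/
theorem models_homEquiv (L : FirstOrder.Language.{u, v}) [L.IsRelational]
    (M N₁ N₂ : Type) [L.Structure M] [L.Structure N₁] [L.Structure N₂]
    [Countable M] [Countable N₁] [Countable N₂]
    (hM : WeaklyOligomorphic L M)
    (h₁ : M ≅[L] N₁) (h₂ : M ≅[L] N₂) :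
    Nonempty (N₁ →[L] N₂) ∧ Nonempty (N₂ →[L] N₁) :=
  models_homEquiv_general L M N₁ N₂ hM h₁ h₂

end Stmt1
end

section
/- Let 𝒰 be a strict Fraïssé class of finite structures over a relational signature, let 𝒞 be a Fraïssé class that is free in 𝒰, and let T be a countable structure with Age(T) ⊆ 𝒰. Then the class 𝒞̄ ∩ CSP(T)-bar (all countable structures A with Age(A) ⊆ 𝒞 admitting a homomorphism into T) contains a universal element: a countable structure U with Age(U) ⊆ 𝒞 and a homomorphism U → T such that every countable structure A with Age(A) ⊆ 𝒞 and A → T embeds into U. Moreover, if Age(T) ⊆ 𝒞, then U can be chosen so that T is a retract of U, i.e. there are homomorphisms s : T → U and r : U → T with r ∘ s = id_T. -/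
open FirstOrder Language CategoryTheory

universe u v

namespace Stmt3

variable {L : FirstOrder.Language.{u, v}}

/-- The age of `M` is contained in the class `C` of finite structures. -/
def AgeIn (C : Set (Bundled.{0} L.Structure)) (M : Type*) [L.Structure M] : Prop :=
  ∀ A : Bundled.{0} L.Structure, Finite A → Nonempty (A ↪[L] M) → A ∈ C

/-- `A` is a countable structure whose age is contained in `C`, i.e. `A ∈ C̄`. -/
def InBar (C : Set (Bundled.{0} L.Structure)) (A : Bundled.{0} L.Structure) : Prop :=
  Countable A ∧ AgeIn C A

/-- A Fraïssé class of finite structures: nonempty, isomorphism-closed, countably many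
isomorphism types, hereditary, with the joint embedding and amalgamation properties. -/
structure IsFraisseClass (C : Set (Bundled.{0} L.Structure)) : Prop where
  nonempty : C.Nonempty
  finite : ∀ A ∈ C, Finite A
  isoInvariant : ∀ A B : Bundled.{0} L.Structure, Nonempty (A ≃[L] B) → (A ∈ C ↔ B ∈ C)
  countableTypes : ∃ S : Set (Bundled.{0} L.Structure), S.Countable ∧
    ∀ A ∈ C, ∃ B ∈ S, Nonempty (A ≃[L] B)
  hereditary : ∀ A ∈ C, ∀ B : Bundled.{0} L.Structure, Finite B → Nonempty (B ↪[L] A) → B ∈ C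
  jep : ∀ A ∈ C, ∀ B ∈ C, ∃ D ∈ C, Nonempty (A ↪[L] D) ∧ Nonempty (B ↪[L] D)
  amalgamation : ∀ A B₁ B₂ : Bundled.{0} L.Structure, A ∈ C → B₁ ∈ C → B₂ ∈ C →
    ∀ (f₁ : A ↪[L] B₁) (f₂ : A ↪[L] B₂),
      ∃ (D : Bundled.{0} L.Structure) (_ : D ∈ C) (g₁ : B₁ ↪[L] D) (g₂ : B₂ ↪[L] D),
        ∀ x, g₁ (f₁ x) = g₂ (f₂ x)

/-- `(P, g₁, g₂)` is a pushout of the pair of embeddings `(f₁, f₂)` in the category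
`(K̄, →)` of countable structures with age contained in `K`, with homomorphisms. -/
def IsPushoutIn (K : Set (Bundled.{0} L.Structure)) {A B₁ B₂ : Bundled.{0} L.Structure}
    (f₁ : A ↪[L] B₁) (f₂ : A ↪[L] B₂) (P : Bundled.{0} L.Structure)
    (g₁ : B₁ →[L] P) (g₂ : B₂ →[L] P) : Prop :=
  InBar K P ∧ (∀ x, g₁ (f₁ x) = g₂ (f₂ x)) ∧
  ∀ D : Bundled.{0} L.Structure, InBar K D →
    ∀ (h₁ : B₁ →[L] D) (h₂ : B₂ →[L] D), (∀ x, h₁ (f₁ x) = h₂ (f₂ x)) →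
      ∃! h : P →[L] D, h.comp g₁ = h₁ ∧ h.comp g₂ = h₂

/-- `(P, g₁, g₂)` is a coproduct of `B₁, B₂` in the category `(K̄, →)`. -/
def IsCoproductIn (K : Set (Bundled.{0} L.Structure)) (B₁ B₂ P : Bundled.{0} L.Structure)
    (g₁ : B₁ →[L] P) (g₂ : B₂ →[L] P) : Prop :=
  InBar K P ∧
  ∀ D : Bundled.{0} L.Structure, InBar K D → ∀ (h₁ : B₁ →[L] D) (h₂ : B₂ →[L] D),
    ∃! h : P →[L] D, h.comp g₁ = h₁ ∧ h.comp g₂ = h₂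

/-- A strict Fraïssé class: a Fraïssé class in which every pair of embeddings with common
domain has a pushout in `(K̄,→)`, and every pair of members has a coproduct in `(K̄,→)`. -/
def IsStrictFraisse (K : Set (Bundled.{0} L.Structure)) : Prop :=
  IsFraisseClass K ∧
  (∀ A B₁ B₂ : Bundled.{0} L.Structure, A ∈ K → B₁ ∈ K → B₂ ∈ K →
    ∀ (f₁ : A ↪[L] B₁) (f₂ : A ↪[L] B₂),
      ∃ (P : Bundled.{0} L.Structure) (g₁ : B₁ →[L] P) (g₂ : B₂ →[L] P),
        IsPushoutIn K f₁ f₂ P g₁ g₂) ∧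
  (∀ B₁ B₂ : Bundled.{0} L.Structure, B₁ ∈ K → B₂ ∈ K →
    ∃ (P : Bundled.{0} L.Structure) (g₁ : B₁ →[L] P) (g₂ : B₂ →[L] P),
      IsCoproductIn K B₁ B₂ P g₁ g₂)

/-- `C` is free in the strict Fraïssé class `K`: `C ⊆ K` and `C` is closed under the
canonical (pushout) amalgams and under finite coproducts taken in `(K̄,→)`. -/
def IsFreeIn (C K : Set (Bundled.{0} L.Structure)) : Prop :=
  C ⊆ K ∧
  (∀ A B₁ B₂ : Bundled.{0} L.Structure, A ∈ C → B₁ ∈ C → B₂ ∈ C →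
    ∀ (f₁ : A ↪[L] B₁) (f₂ : A ↪[L] B₂) (P : Bundled.{0} L.Structure)
      (g₁ : B₁ →[L] P) (g₂ : B₂ →[L] P), IsPushoutIn K f₁ f₂ P g₁ g₂ → P ∈ C) ∧
  (∀ B₁ B₂ : Bundled.{0} L.Structure, B₁ ∈ C → B₂ ∈ C →
    ∀ (P : Bundled.{0} L.Structure) (g₁ : B₁ →[L] P) (g₂ : B₂ →[L] P),
      IsCoproductIn K B₁ B₂ P g₁ g₂ → P ∈ C)


/-! Call a homomorphism into `T` a colouring. Since `𝒞` is free in the strict class `𝒰`, coloured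
members of `𝒞` amalgamate: the canonical pushout lies in `𝒞`, its universal property colours it
(as `T ∈ 𝒰̄`), and its legs are embeddings because they factor the legs of an ordinary amalgam
in `𝒰`. Up to isomorphism there are only countably many coloured extension problems
`A ↪ B` in `𝒞`, so a chain of finite coloured members of `𝒞` solving each of them at infinitely
many stages has a countable direct limit `M` with `Age(M) ⊆ 𝒞` and the coloured extension
property. Extending colour-preserving partial isomorphisms one point at a time then embeds
every countable coloured `A` with `Age(A) ⊆ 𝒞` into `M`, compatibly with the colourings.
Applied to `T` coloured by the identity, this embedding is a section of the colouring of `M`. -/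

open Structure

def _root_.FirstOrder.Language.Hom.toEmbeddingOfComp {A B D : Type*} [L.Structure A]
    [L.Structure B] [L.Structure D] (g : A →[L] B) (k : B →[L] D) (e : A ↪[L] D)
    (hk : ∀ a, k (g a) = e a) : A ↪[L] B where
  toFun := g
  inj' a b hab := e.injective (by rw [← hk, ← hk, hab])
  map_fun' := g.map_fun'
  map_rel' r x := by
    refine ⟨fun h => (e.map_rel r x).1 ?_, g.map_rel r x⟩
    have hke : ⇑k ∘ ⇑g ∘ x = ⇑e ∘ x := funext fun i => hk (x i)
    simpa only [hke] using k.map_rel r _ h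

section FraisseClass

variable {K : Set (Bundled.{0} L.Structure)}

theorem IsFraisseClass.inBar (hK : IsFraisseClass K) {A : Bundled.{0} L.Structure} (hA : A ∈ K) :
    InBar K A :=
  have := hK.finite A hA
  ⟨Finite.to_countable, fun B hB e => hK.hereditary A hA B hB e⟩

theorem IsFraisseClass.relMap_nullary_iff (hK : IsFraisseClass K) {A B : Bundled.{0} L.Structure}
    (hA : A ∈ K) (hB : B ∈ K) (r : L.Relations 0) (x : Fin 0 → A) (y : Fin 0 → B) :
    RelMap r x ↔ RelMap r y := by
  obtain ⟨D, -, ⟨e₁⟩, ⟨e₂⟩⟩ := hK.jep A hA B hB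
  have hxy : ⇑e₁ ∘ x = ⇑e₂ ∘ y := funext finZeroElim
  rw [← e₁.map_rel r x, ← e₂.map_rel r y, hxy]

variable [L.IsRelational]

instance isEmpty_bot {M : Type*} [L.Structure M] : IsEmpty (⊥ : L.Substructure M) :=
  ⟨fun x => by
    simpa only [← Substructure.closure_empty, Substructure.mem_closure_iff_of_isRelational,
      Set.mem_empty_iff_false] using x.2⟩

theorem AgeIn.bot_mem {M : Type} [L.Structure M] (hM : AgeIn K M) :
    Bundled.of (c := L.Structure) (⊥ : L.Substructure M) ∈ K :=
  hM _ (inferInstanceAs (Finite (⊥ : L.Substructure M))) ⟨Substructure.subtype _⟩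

/-- In a relational language the empty structure carries only the nullary relations, and joint
embedding forces these to agree across `K`. -/
def IsFraisseClass.embeddingBot (hK : IsFraisseClass K) {M N : Type} [L.Structure M]
    [L.Structure N] (hM : AgeIn K M) (hN : AgeIn K N) : (⊥ : L.Substructure M) ↪[L] N where
  toFun := isEmptyElim
  inj' a := isEmptyElim a
  map_fun' f := isEmptyElim f
  map_rel' {n} r x := by
    match n with
    | 0 =>
      let y : Fin 0 → (⊥ : L.Substructure N) := finZeroElim
      have hxy : (isEmptyElim : (⊥ : L.Substructure M) → N) ∘ x = Substructure.subtype ⊥ ∘ y :=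
        funext finZeroElim
      rw [hxy, (Substructure.subtype ⊥).map_rel r y]
      exact (hK.relMap_nullary_iff hM.bot_mem hN.bot_mem r x y).symm
    | _ + 1 => exact isEmptyElim (x 0)

end FraisseClass

section Colored

variable {U C : Set (Bundled.{0} L.Structure)} {T : Type} [L.Structure T]

def HasColoredAmalgamation (C : Set (Bundled.{0} L.Structure)) (T : Type) [L.Structure T] :
    Prop :=
  ∀ A B₁ B₂ : Bundled.{0} L.Structure, A ∈ C → B₁ ∈ C → B₂ ∈ C →
    ∀ (f₁ : A ↪[L] B₁) (f₂ : A ↪[L] B₂) (c₁ : B₁ →[L] T) (c₂ : B₂ →[L] T),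
      (∀ a, c₁ (f₁ a) = c₂ (f₂ a)) →
      ∃ D ∈ C, ∃ (g₁ : B₁ ↪[L] D) (g₂ : B₂ ↪[L] D) (d : D →[L] T),
        (∀ a, g₁ (f₁ a) = g₂ (f₂ a)) ∧ (∀ b, d (g₁ b) = c₁ b) ∧ ∀ b, d (g₂ b) = c₂ b

theorem IsFreeIn.hasColoredAmalgamation (hU : IsStrictFraisse U) (hfree : IsFreeIn C U)
    [Countable T] (hT : AgeIn U T) : HasColoredAmalgamation C T := by
  intro A B₁ B₂ hA hB₁ hB₂ f₁ f₂ c₁ c₂ hc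
  obtain ⟨P, g₁, g₂, hP⟩ := hU.2.1 A B₁ B₂ (hfree.1 hA) (hfree.1 hB₁) (hfree.1 hB₂) f₁ f₂
  have hPC : P ∈ C := hfree.2.1 A B₁ B₂ hA hB₁ hB₂ f₁ f₂ P g₁ g₂ hP
  obtain ⟨-, hg, hPuniv⟩ := hP
  obtain ⟨d, ⟨hd₁, hd₂⟩, -⟩ := hPuniv (Bundled.of T) ⟨‹_›, hT⟩ c₁ c₂ hc
  obtain ⟨E, hE, e₁, e₂, he⟩ :=
    hU.1.amalgamation A B₁ B₂ (hfree.1 hA) (hfree.1 hB₁) (hfree.1 hB₂) f₁ f₂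
  obtain ⟨k, ⟨hk₁, hk₂⟩, -⟩ := hPuniv E (hU.1.inBar hE) e₁.toHom e₂.toHom he
  exact ⟨P, hPC, g₁.toEmbeddingOfComp k e₁ (DFunLike.congr_fun hk₁),
    g₂.toEmbeddingOfComp k e₂ (DFunLike.congr_fun hk₂), d, hg,
    DFunLike.congr_fun hd₁, DFunLike.congr_fun hd₂⟩

structure Colored (C : Set (Bundled.{0} L.Structure)) (T : Type) [L.Structure T] where
  carrier : Bundled.{0} L.Structure
  mem : carrier ∈ C
  color : carrier →[L] T

/-- An instance of the extension problem: extend an embedding of `dom` along `emb`, respecting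
the colouring of `cod`. -/
structure ColoredArrow (C : Set (Bundled.{0} L.Structure)) (T : Type) [L.Structure T] where
  dom : Bundled.{0} L.Structure
  dom_mem : dom ∈ C
  cod : Colored C T
  emb : dom ↪[L] cod.carrier

def ColoredArrow.IsRealized {M : Type} [L.Structure M] (t : ColoredArrow C T) (χ : M →[L] T) :
    Prop :=
  ∀ g : t.dom ↪[L] M, (∀ a, χ (g a) = t.cod.color (t.emb a)) →
    ∃ h : t.cod.carrier ↪[L] M, (∀ a, h (t.emb a) = g a) ∧ ∀ b, χ (h b) = t.cod.color b

def HasColoredExtension (C : Set (Bundled.{0} L.Structure)) {M : Type} [L.Structure M]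
    (χ : M →[L] T) : Prop :=
  ∀ t : ColoredArrow C T, t.IsRealized χ

structure ColoredArrow.Iso (t t' : ColoredArrow C T) where
  dom : t.dom ≃[L] t'.dom
  cod : t.cod.carrier ≃[L] t'.cod.carrier
  cod_emb : ∀ a, cod (t.emb a) = t'.emb (dom a)
  color_cod : ∀ b, t'.cod.color (cod b) = t.cod.color b

theorem ColoredArrow.IsRealized.of_iso {M : Type} [L.Structure M] {χ : M →[L] T}
    {t t' : ColoredArrow C T} (ht' : t'.IsRealized χ) (e : t.Iso t') : t.IsRealized χ := by
  intro g hg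
  obtain ⟨h, hh, hhc⟩ := ht' (g.comp e.dom.symm.toEmbedding) fun a => by
    simp [hg, ← e.color_cod, e.cod_emb]
  refine ⟨h.comp e.cod.toEmbedding, fun a => ?_, fun b => ?_⟩
  · simpa [e.cod_emb] using hh (e.dom a)
  · simpa [e.color_cod] using hhc (e.cod b)

theorem ColoredArrow.exists_seq_iso (hC : IsFraisseClass C) [Countable T]
    [Nonempty (ColoredArrow C T)] :
    ∃ ar : ℕ → ColoredArrow C T, ∀ t : ColoredArrow C T, ∃ n, Nonempty (t.Iso (ar n)) := by
  obtain ⟨S, hS, hSrep⟩ := hC.countableTypes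
  have hrep : ∀ A ∈ C, ∃ B : ↥(S ∩ C), Nonempty (A ≃[L] B.1) := fun A hA => by
    obtain ⟨B, hB, ⟨α⟩⟩ := hSrep A hA
    exact ⟨⟨B, hB, (hC.isoInvariant A B ⟨α⟩).1 hA⟩, ⟨α⟩⟩
  let Idx := Σ p : ↥(S ∩ C) × ↥(S ∩ C), (p.1.1 ↪[L] p.2.1) × (p.2.1 →[L] T)
  let toArrow (i : Idx) : ColoredArrow C T :=
    ⟨i.1.1.1, i.1.1.2.2, ⟨i.1.2.1, i.1.2.2.2, i.2.2⟩, i.2.1⟩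
  have hcover : ∀ t : ColoredArrow C T, ∃ i : Idx, Nonempty (t.Iso (toArrow i)) := by
    intro t
    obtain ⟨A, ⟨α⟩⟩ := hrep t.dom t.dom_mem
    obtain ⟨B, ⟨β⟩⟩ := hrep t.cod.carrier t.cod.mem
    exact ⟨⟨(A, B), (β.toEmbedding.comp (t.emb.comp α.symm.toEmbedding),
      t.cod.color.comp β.symm.toHom)⟩, ⟨⟨α, β, by simp [toArrow], by simp [toArrow]⟩⟩⟩
  have : Countable ↥(S ∩ C) := (hS.mono Set.inter_subset_left).to_subtype
  have : ∀ p : ↥(S ∩ C) × ↥(S ∩ C), Countable ((p.1.1 ↪[L] p.2.1) × (p.2.1 →[L] T)) := by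
    intro p
    have := hC.finite _ p.1.2.2
    have := hC.finite _ p.2.2.2
    have : Countable (p.1.1 ↪[L] p.2.1) := DFunLike.coe_injective.countable
    have : Countable (p.2.1 →[L] T) := DFunLike.coe_injective.countable
    infer_instance
  have : Nonempty Idx := (hcover (Classical.arbitrary _)).nonempty
  obtain ⟨e, he⟩ := exists_surjective_nat Idx
  refine ⟨toArrow ∘ e, fun t => ?_⟩
  obtain ⟨i, hi⟩ := hcover t
  obtain ⟨n, rfl⟩ := he i
  exact ⟨n, hi⟩

theorem ColoredArrow.exists_extension_of_list (ham : HasColoredAmalgamation C T)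
    (t : ColoredArrow C T) {X : Colored C T} (l : List (t.dom ↪[L] X.carrier))
    (hl : ∀ g ∈ l, ∀ a, X.color (g a) = t.cod.color (t.emb a)) (Y : Colored C T)
    (e : X.carrier ↪[L] Y.carrier) (he : ∀ x, Y.color (e x) = X.color x) :
    ∃ (Z : Colored C T) (e' : Y.carrier ↪[L] Z.carrier), (∀ y, Z.color (e' y) = Y.color y) ∧
      ∀ g ∈ l, ∃ h : t.cod.carrier ↪[L] Z.carrier,
        (∀ a, h (t.emb a) = e' (e (g a))) ∧ ∀ b, Z.color (h b) = t.cod.color b := by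
  induction l generalizing Y e with
  | nil => exact ⟨Y, Embedding.refl L _, fun _ => rfl, by simp⟩
  | cons g l ih =>
    obtain ⟨D, hD, g₁, g₂, d, hg, hd₁, hd₂⟩ := ham t.dom t.cod.carrier Y.carrier t.dom_mem
      t.cod.mem Y.mem t.emb (e.comp g) t.cod.color Y.color fun a => by
        simp [he, hl g (by simp) a]
    obtain ⟨Z, e', he', hext⟩ := ih (fun g' hg' => hl g' (by simp [hg'])) ⟨D, hD, d⟩
      (g₂.comp e) fun x => by simp [hd₂, he]
    refine ⟨Z, e'.comp g₂, fun y => by simp [he', hd₂], ?_⟩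
    rintro g' (_ | ⟨_, hg'l⟩)
    · exact ⟨e'.comp g₁, fun a => by simp [hg], fun b => by simp [he', hd₁]⟩
    · simpa using hext g' hg'l

theorem ColoredArrow.exists_extension (hC : IsFraisseClass C) (ham : HasColoredAmalgamation C T)
    (t : ColoredArrow C T) (X : Colored C T) :
    ∃ (Y : Colored C T) (e : X.carrier ↪[L] Y.carrier), (∀ x, Y.color (e x) = X.color x) ∧
      ∀ g : t.dom ↪[L] X.carrier, (∀ a, X.color (g a) = t.cod.color (t.emb a)) →
        ∃ h : t.cod.carrier ↪[L] Y.carrier,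
          (∀ a, h (t.emb a) = e (g a)) ∧ ∀ b, Y.color (h b) = t.cod.color b := by
  have := hC.finite _ t.dom_mem
  have := hC.finite _ X.mem
  have : Finite (t.dom ↪[L] X.carrier) := Finite.of_injective _ DFunLike.coe_injective
  obtain ⟨l, -, hl⟩ := Finite.exists_univ_list
    {g : t.dom ↪[L] X.carrier // ∀ a, X.color (g a) = t.cod.color (t.emb a)}
  obtain ⟨Y, e, he, hext⟩ := t.exists_extension_of_list ham (l.map Subtype.val)
    (fun g hg => by obtain ⟨g, -, rfl⟩ := List.mem_map.1 hg; exact g.2) X (Embedding.refl L _)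
    fun _ => rfl
  exact ⟨Y, e, he, fun g hg => hext g (List.mem_map_of_mem (hl ⟨g, hg⟩))⟩

structure ColoredChain (C : Set (Bundled.{0} L.Structure)) (T : Type) [L.Structure T] where
  obj : ℕ → Colored C T
  map : ∀ n, (obj n).carrier ↪[L] (obj (n + 1)).carrier
  color_map : ∀ n x, (obj (n + 1)).color (map n x) = (obj n).color x

end Colored

namespace ColoredChain

variable {C : Set (Bundled.{0} L.Structure)} {T : Type} [L.Structure T] (G : ColoredChain C T)

noncomputable abbrev mapLE : ∀ m n, m ≤ n → (G.obj m).carrier ↪[L] (G.obj n).carrier :=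
  DirectedSystem.natLERec G.map

noncomputable instance : DirectedSystem (fun n => (G.obj n).carrier) fun m n h => G.mapLE m n h :=
  DirectedSystem.natLERec.directedSystem _

theorem mapLE_succ {m n : ℕ} (h : m ≤ n) (x : (G.obj m).carrier) :
    G.mapLE m (n + 1) (h.trans n.le_succ) x = G.map n (G.mapLE m n h x) := by
  simp only [DirectedSystem.coe_natLERec]
  exact Nat.leRecOn_succ (C := fun k => ((G.obj k).carrier : Type)) h x

theorem color_mapLE {m n : ℕ} (h : m ≤ n) (x : (G.obj m).carrier) :
    (G.obj n).color (G.mapLE m n h x) = (G.obj m).color x := by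
  induction n, h using Nat.le_induction with
  | base => rw [Language.DirectedSystem.map_self G.mapLE]
  | succ n hmn ih => rw [G.mapLE_succ hmn, G.color_map, ih]

abbrev Limit : Type := Language.DirectLimit (fun n => (G.obj n).carrier) G.mapLE

noncomputable def toLimit (n : ℕ) : (G.obj n).carrier ↪[L] G.Limit :=
  DirectLimit.of L ℕ _ G.mapLE n

theorem toLimit_mapLE {m n : ℕ} (h : m ≤ n) (x : (G.obj m).carrier) :
    G.toLimit n (G.mapLE m n h x) = G.toLimit m x :=
  DirectLimit.of_f

theorem toLimit_map (n : ℕ) (x : (G.obj n).carrier) :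
    G.toLimit (n + 1) (G.map n x) = G.toLimit n x := by
  have := G.toLimit_mapLE n.le_succ x
  rwa [G.mapLE_succ le_rfl, Language.DirectedSystem.map_self G.mapLE x] at this

theorem countable_limit (hC : IsFraisseClass C) : Countable G.Limit := by
  have : ∀ n, Countable (G.obj n).carrier := fun n =>
    have := hC.finite _ (G.obj n).mem
    Finite.to_countable
  have hsurj : Function.Surjective fun p : Σ n, (G.obj n).carrier => G.toLimit p.1 p.2 :=
    fun z => by
      obtain ⟨n, x, hx⟩ := DirectLimit.exists_of z
      exact ⟨⟨n, x⟩, hx⟩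
  exact hsurj.countable

theorem exists_toLimit_comp_eq {A : Type} [L.Structure A] [Finite A] (g : A ↪[L] G.Limit) :
    ∃ (n : ℕ) (g₀ : A ↪[L] (G.obj n).carrier), ∀ a, G.toLimit n (g₀ a) = g a := by
  obtain ⟨n, y, hy⟩ := DirectLimit.exists_quotient_mk'_sigma_mk'_eq _ G.mapLE g
  have hmem : ∀ a, g a ∈ (G.toLimit n).toHom.range := fun a => ⟨y a, by rw [hy]; rfl⟩
  exact ⟨n, (G.toLimit n).equivRange.symm.toEmbedding.comp (g.codRestrict _ hmem),
    fun a => congrArg Subtype.val ((G.toLimit n).equivRange.apply_symm_apply ⟨g a, hmem a⟩)⟩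

theorem ageIn_limit (hC : IsFraisseClass C) : AgeIn C G.Limit := fun A hA ⟨g⟩ => by
  obtain ⟨n, g₀, -⟩ := G.exists_toLimit_comp_eq g
  exact hC.hereditary _ (G.obj n).mem A hA ⟨g₀⟩

noncomputable def limitColor [L.IsRelational] : G.Limit →[L] T where
  toFun := Quotient.lift (fun p : Structure.Sigma G.mapLE => (G.obj p.1).color p.2) <| by
    rintro ⟨i, x⟩ ⟨j, y⟩ ⟨k, _, _, hxy⟩
    simpa only [G.color_mapLE] using congrArg (G.obj k).color hxy
  map_fun' f := isEmptyElim f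
  map_rel' r x h := by
    obtain ⟨i, y, rfl⟩ := DirectLimit.exists_quotient_mk'_sigma_mk'_eq _ G.mapLE x
    exact (G.obj i).color.map_rel r y ((DirectLimit.relMap_quotient_mk'_sigma_mk' _ G.mapLE).mp h)

theorem limitColor_toLimit [L.IsRelational] (n : ℕ) (x : (G.obj n).carrier) :
    G.limitColor (G.toLimit n x) = (G.obj n).color x :=
  rfl

variable (hC : IsFraisseClass C) (ham : HasColoredAmalgamation C T) (ar : ℕ → ColoredArrow C T)
  (X₀ : Colored C T)

/-- Stage `n + 1` solves every instance of the arrow `ar n.unpair.1` at stage `n`; since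
`n.unpair.2` is arbitrary, every arrow is treated at infinitely many stages. -/
noncomputable def generic : ColoredChain C T where
  obj n := Nat.rec X₀ (fun n X => ((ar n.unpair.1).exists_extension hC ham X).choose) n
  map n := ((ar n.unpair.1).exists_extension hC ham _).choose_spec.choose
  color_map n := ((ar n.unpair.1).exists_extension hC ham _).choose_spec.choose_spec.1

theorem generic_extends {i n : ℕ} (hi : n.unpair.1 = i)
    (g : (ar i).dom ↪[L] ((generic hC ham ar X₀).obj n).carrier)
    (hg : ∀ a, ((generic hC ham ar X₀).obj n).color (g a) = (ar i).cod.color ((ar i).emb a)) :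
    ∃ h : (ar i).cod.carrier ↪[L] ((generic hC ham ar X₀).obj (n + 1)).carrier,
      (∀ a, h ((ar i).emb a) = (generic hC ham ar X₀).map n (g a)) ∧
      ∀ b, ((generic hC ham ar X₀).obj (n + 1)).color (h b) = (ar i).cod.color b := by
  subst hi
  exact ((ar n.unpair.1).exists_extension hC ham _).choose_spec.choose_spec.2 g hg

theorem isRealized_generic [L.IsRelational] (i : ℕ) :
    (ar i).IsRealized (generic hC ham ar X₀).limitColor := by
  set G := generic hC ham ar X₀
  intro g hg
  have := hC.finite _ (ar i).dom_mem
  obtain ⟨n, g₀, hg₀⟩ := G.exists_toLimit_comp_eq g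
  have hn : n ≤ Nat.pair i n := Nat.right_le_pair i n
  obtain ⟨h, hh, hhc⟩ := generic_extends hC ham ar X₀ (by rw [Nat.unpair_pair])
    ((G.mapLE n _ hn).comp g₀) fun a => by
      rw [Embedding.comp_apply, G.color_mapLE, ← G.limitColor_toLimit, hg₀, hg]
  refine ⟨(G.toLimit _).comp h, fun a => ?_, fun b => ?_⟩
  · rw [Embedding.comp_apply, hh, G.toLimit_map, Embedding.comp_apply, G.toLimit_mapLE, hg₀]
  · rw [Embedding.comp_apply, G.limitColor_toLimit, hhc]

end ColoredChain

theorem exists_countable_hasColoredExtension [L.IsRelational] {C : Set (Bundled.{0} L.Structure)}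
    {T : Type} [L.Structure T] [Countable T] (hC : IsFraisseClass C)
    (ham : HasColoredAmalgamation C T) (X₀ : Colored C T) :
    ∃ (M : Type) (_ : L.Structure M) (χ : M →[L] T),
      Countable M ∧ AgeIn C M ∧ HasColoredExtension C χ := by
  have : Nonempty (ColoredArrow C T) := ⟨⟨X₀.carrier, X₀.mem, X₀, Embedding.refl L _⟩⟩
  obtain ⟨ar, har⟩ := ColoredArrow.exists_seq_iso (T := T) hC
  let G := ColoredChain.generic hC ham ar X₀
  refine ⟨G.Limit, inferInstance, G.limitColor, G.countable_limit hC, G.ageIn_limit hC,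
    fun t => ?_⟩
  obtain ⟨i, ⟨e⟩⟩ := har t
  exact (ColoredChain.isRealized_generic hC ham ar X₀ i).of_iso e

section Universality

open PartialEquiv DirectLimit

variable [L.IsRelational] {C : Set (Bundled.{0} L.Structure)} {T : Type} [L.Structure T]
  {M A : Type} [L.Structure M] [L.Structure A]

abbrev ColoredFGEquiv (χ : M →[L] T) (c : A →[L] T) : Type :=
  {f : L.FGEquiv A M // ∀ x, χ (f.1.toEmbedding x) = c x}

variable {χ : M →[L] T} {c : A →[L] T}

theorem ColoredFGEquiv.exists_mem_dom_and_le (hA : AgeIn C A) (hχ : HasColoredExtension C χ)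
    (f : ColoredFGEquiv χ c) (a : A) : ∃ g : ColoredFGEquiv χ c, a ∈ g.1.1.dom ∧ f ≤ g := by
  set S := f.1.1.dom
  have hS' : (Substructure.closure L {a} ⊔ S).FG := (Substructure.fg_closure_singleton a).sup f.1.2
  set S' := Substructure.closure L {a} ⊔ S
  have := f.1.2.finite
  have := hS'.finite
  obtain ⟨h, hfh, hch⟩ := hχ ⟨Bundled.of S, hA _ ‹_› ⟨S.subtype⟩,
    ⟨Bundled.of S', hA _ ‹_› ⟨S'.subtype⟩, c.comp S'.subtype.toHom⟩,
    Substructure.inclusion le_sup_right⟩ f.1.1.toEmbedding f.2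
  refine ⟨⟨⟨⟨S', h.toHom.range, h.equivRange⟩, hS'⟩, hch⟩,
    le_sup_left (a := Substructure.closure L {a}) (Substructure.subset_closure rfl),
    ⟨le_sup_right, Embedding.ext fun x => ?_⟩⟩
  exact (Embedding.equivRange_apply h _).trans (hfh x)

theorem HasColoredExtension.exists_embedding (hC : IsFraisseClass C) (hM : AgeIn C M)
    (hχ : HasColoredExtension C χ) [Countable A] (hA : AgeIn C A) (c : A →[L] T) :
    ∃ e : A ↪[L] M, ∀ a, χ (e a) = c a := by
  have := Encodable.ofCountable A
  let f₀ : ColoredFGEquiv χ c :=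
    ⟨⟨⟨⊥, _, (hC.embeddingBot hA hM).equivRange⟩, Substructure.fg_bot⟩,
      fun x => isEmptyElim x⟩
  let D : A → Order.Cofinal (ColoredFGEquiv χ c) := fun a =>
    ⟨{g | a ∈ g.1.1.dom}, fun f => ColoredFGEquiv.exists_mem_dom_and_le hA hχ f a⟩
  let S : ℕ →o A ≃ₚ[L] M :=
    ⟨fun n => (Order.sequenceOfCofinals f₀ D n).1.1,
      fun _ _ h => Order.sequenceOfCofinals.monotone f₀ D h⟩
  have hmem : ∀ a, a ∈ (S (Encodable.encode a + 1)).dom :=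
    fun a => Order.sequenceOfCofinals.encode_mem f₀ D a
  have htop : (partialEquivLimit S).dom = ⊤ :=
    eq_top_iff.2 fun a _ => le_iSup (fun n => (S n).dom) _ (hmem a)
  refine ⟨toEmbeddingOfEqTop htop, fun a => ?_⟩
  have hlim := congrArg Subtype.val
    (toEquiv_inclusion_apply (le_partialEquivLimit S (Encodable.encode a + 1)) ⟨a, hmem a⟩)
  rw [toEmbeddingOfEqTop_apply]
  exact (congrArg χ hlim).trans ((Order.sequenceOfCofinals f₀ D _).2 ⟨a, hmem a⟩)

end Universality

/-- If `𝒰` is a strict Fraïssé class, `𝒞` a Fraïssé class free in `𝒰`, and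
`T` a countable structure with `Age(T) ⊆ 𝒰`, then `𝒞̄ ∩ CSP(T)-bar` has a universal element;
moreover if `Age(T) ⊆ 𝒞` then the universal element can be chosen so that `T` is a retract
of it. -/
theorem exists_universal_in_csp (L : FirstOrder.Language.{u, v}) [L.IsRelational]
    (U C : Set (Bundled.{0} L.Structure))
    (hU : IsStrictFraisse U) (hC : IsFraisseClass C) (hfree : IsFreeIn C U)
    (T : Type) [L.Structure T] [Countable T] (hT : AgeIn U T) :
    (∃ (Ub : Bundled.{0} L.Structure) (_u : Ub →[L] T), InBar C Ub ∧
      ∀ A : Bundled.{0} L.Structure, InBar C A → Nonempty (A →[L] T) →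
        Nonempty (A ↪[L] Ub)) ∧
    (AgeIn C T →
      ∃ (Ub : Bundled.{0} L.Structure) (u : Ub →[L] T) (s : T →[L] Ub), InBar C Ub ∧
        (∀ A : Bundled.{0} L.Structure, InBar C A → Nonempty (A →[L] T) →
          Nonempty (A ↪[L] Ub)) ∧
        ∀ t, u (s t) = t) := by
  obtain ⟨A₀, hA₀⟩ := hC.nonempty
  let X₀ : Colored C T := ⟨Bundled.of (⊥ : L.Substructure A₀), (hC.inBar hA₀).2.bot_mem,
    (hU.1.embeddingBot (hU.1.inBar (hfree.1 hA₀)).2 hT).toHom⟩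
  obtain ⟨M, _, χ, hMc, hMC, hχ⟩ :=
    exists_countable_hasColoredExtension hC (hfree.hasColoredAmalgamation hU hT) X₀
  have huniv (A : Bundled.{0} L.Structure) : InBar C A → Nonempty (A →[L] T) →
      Nonempty (A ↪[L] M) := fun ⟨_, hA⟩ ⟨c⟩ =>
    ⟨(hχ.exists_embedding hC hMC hA c).choose⟩
  refine ⟨⟨Bundled.of M, χ, ⟨hMc, hMC⟩, huniv⟩, fun hTC => ?_⟩
  obtain ⟨s, hs⟩ := hχ.exists_embedding hC hMC hTC (Hom.id L T)
  exact ⟨Bundled.of M, χ, s.toHom, ⟨hMc, hMC⟩, huniv, hs⟩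

end Stmt3
end

section
/- Let (U,u) be a universal homogeneous T-colored structure in 𝒞̄. If the Fraïssé limit of 𝒞 is finite or has an oligomorphic automorphism group, and if T is finite, then the strong automorphism group sAut(U,u) = { f ∈ Aut(U) : u ∘ f = u } is oligomorphic, i.e. for every n ≥ 1 it has only finitely many orbits on n-tuples of U. -/
/-!
A tuple `x` of `U` generates a finite substructure lying in the age of `U`, hence in `𝒞`, so it
embeds into the Fraïssé limit `F`. Record the `Aut(F)`-orbit of the image of `x` (finitely many
choices, `F` being oligomorphic) together with the colours `u ∘ x` (finitely many, `T` being
finite). Two tuples with the same record generate substructures that embed compatibly into `F`,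
so `x ↦ y` extends to a colour-preserving embedding of the substructure generated by `x`, and
homogeneity of `(U,u)` extends that to a strong automorphism.
-/

open FirstOrder Language CategoryTheory

universe u v

namespace Stmt8

/-- The automorphism group of `M` is oligomorphic: for every `n` there are only finitely
many orbits on `n`-tuples. -/
def AutOligomorphic (L : FirstOrder.Language.{u, v}) (M : Type*) [L.Structure M] : Prop :=
  ∀ n : ℕ, ∃ S : Set (Fin n → M), S.Finite ∧
    ∀ x : Fin n → M, ∃ y ∈ S, ∃ g : M ≃[L] M, ⇑g ∘ y = x

variable {L : FirstOrder.Language.{u, v}}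

/-- The age of `M` is contained in the class `C` of finite structures. -/
def AgeIn (C : Set (Bundled.{0} L.Structure)) (M : Type*) [L.Structure M] : Prop :=
  ∀ A : Bundled.{0} L.Structure, Finite A → Nonempty (A ↪[L] M) → A ∈ C

/-- `A` is a countable structure whose age is contained in `C`, i.e. `A ∈ C̄`. -/
def InBar (C : Set (Bundled.{0} L.Structure)) (A : Bundled.{0} L.Structure) : Prop :=
  Countable A ∧ AgeIn C A

/-- A Fraïssé class of finite structures: nonempty, isomorphism-closed, countably many
isomorphism types, hereditary, with the joint embedding and amalgamation properties. -/
structure IsFraisseClass (C : Set (Bundled.{0} L.Structure)) : Prop where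
  nonempty : C.Nonempty
  finite : ∀ A ∈ C, Finite A
  isoInvariant : ∀ A B : Bundled.{0} L.Structure, Nonempty (A ≃[L] B) → (A ∈ C ↔ B ∈ C)
  countableTypes : ∃ S : Set (Bundled.{0} L.Structure), S.Countable ∧
    ∀ A ∈ C, ∃ B ∈ S, Nonempty (A ≃[L] B)
  hereditary : ∀ A ∈ C, ∀ B : Bundled.{0} L.Structure, Finite B → Nonempty (B ↪[L] A) → B ∈ C
  jep : ∀ A ∈ C, ∀ B ∈ C, ∃ D ∈ C, Nonempty (A ↪[L] D) ∧ Nonempty (B ↪[L] D)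
  amalgamation : ∀ A B₁ B₂ : Bundled.{0} L.Structure, A ∈ C → B₁ ∈ C → B₂ ∈ C →
    ∀ (f₁ : A ↪[L] B₁) (f₂ : A ↪[L] B₂),
      ∃ (D : Bundled.{0} L.Structure) (_ : D ∈ C) (g₁ : B₁ ↪[L] D) (g₂ : B₂ ↪[L] D),
        ∀ x, g₁ (f₁ x) = g₂ (f₂ x)

/-- `(P, g₁, g₂)` is a pushout of the pair of embeddings `(f₁, f₂)` in the category
`(K̄, →)` of countable structures with age contained in `K`, with homomorphisms. -/
def IsPushoutIn (K : Set (Bundled.{0} L.Structure)) {A B₁ B₂ : Bundled.{0} L.Structure}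
    (f₁ : A ↪[L] B₁) (f₂ : A ↪[L] B₂) (P : Bundled.{0} L.Structure)
    (g₁ : B₁ →[L] P) (g₂ : B₂ →[L] P) : Prop :=
  InBar K P ∧ (∀ x, g₁ (f₁ x) = g₂ (f₂ x)) ∧
  ∀ D : Bundled.{0} L.Structure, InBar K D →
    ∀ (h₁ : B₁ →[L] D) (h₂ : B₂ →[L] D), (∀ x, h₁ (f₁ x) = h₂ (f₂ x)) →
      ∃! h : P →[L] D, h.comp g₁ = h₁ ∧ h.comp g₂ = h₂

/-- `(P, g₁, g₂)` is a coproduct of `B₁, B₂` in the category `(K̄, →)`. -/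
def IsCoproductIn (K : Set (Bundled.{0} L.Structure)) (B₁ B₂ P : Bundled.{0} L.Structure)
    (g₁ : B₁ →[L] P) (g₂ : B₂ →[L] P) : Prop :=
  InBar K P ∧
  ∀ D : Bundled.{0} L.Structure, InBar K D → ∀ (h₁ : B₁ →[L] D) (h₂ : B₂ →[L] D),
    ∃! h : P →[L] D, h.comp g₁ = h₁ ∧ h.comp g₂ = h₂

/-- A strict Fraïssé class: a Fraïssé class in which every pair of embeddings with common
domain has a pushout in `(K̄,→)`, and every pair of members has a coproduct in `(K̄,→)`. -/
def IsStrictFraisse (K : Set (Bundled.{0} L.Structure)) : Prop :=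
  IsFraisseClass K ∧
  (∀ A B₁ B₂ : Bundled.{0} L.Structure, A ∈ K → B₁ ∈ K → B₂ ∈ K →
    ∀ (f₁ : A ↪[L] B₁) (f₂ : A ↪[L] B₂),
      ∃ (P : Bundled.{0} L.Structure) (g₁ : B₁ →[L] P) (g₂ : B₂ →[L] P),
        IsPushoutIn K f₁ f₂ P g₁ g₂) ∧
  (∀ B₁ B₂ : Bundled.{0} L.Structure, B₁ ∈ K → B₂ ∈ K →
    ∃ (P : Bundled.{0} L.Structure) (g₁ : B₁ →[L] P) (g₂ : B₂ →[L] P),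
      IsCoproductIn K B₁ B₂ P g₁ g₂)

/-- `C` is free in the strict Fraïssé class `K`: `C ⊆ K` and `C` is closed under the
canonical (pushout) amalgams and under finite coproducts taken in `(K̄,→)`. -/
def IsFreeIn (C K : Set (Bundled.{0} L.Structure)) : Prop :=
  C ⊆ K ∧
  (∀ A B₁ B₂ : Bundled.{0} L.Structure, A ∈ C → B₁ ∈ C → B₂ ∈ C →
    ∀ (f₁ : A ↪[L] B₁) (f₂ : A ↪[L] B₂) (P : Bundled.{0} L.Structure)
      (g₁ : B₁ →[L] P) (g₂ : B₂ →[L] P), IsPushoutIn K f₁ f₂ P g₁ g₂ → P ∈ C) ∧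
  (∀ B₁ B₂ : Bundled.{0} L.Structure, B₁ ∈ C → B₂ ∈ C →
    ∀ (P : Bundled.{0} L.Structure) (g₁ : B₁ →[L] P) (g₂ : B₂ →[L] P),
      IsCoproductIn K B₁ B₂ P g₁ g₂ → P ∈ C)

/-- `F` is a Fraïssé limit of the class `C`: a countable structure whose age is exactly
`C` and which is ultrahomogeneous. -/
def IsFraisseLimitOf (C : Set (Bundled.{0} L.Structure)) (F : Bundled.{0} L.Structure) : Prop :=
  Countable F ∧
  (∀ A : Bundled.{0} L.Structure, Finite A → (A ∈ C ↔ Nonempty (A ↪[L] F))) ∧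
  ∀ A : Bundled.{0} L.Structure, Finite A → ∀ f g : A ↪[L] F,
    ∃ h : F ≃[L] F, ∀ x, h (f x) = g x

/-- `(U,u)` is a universal `T`-colored structure in `C̄`: every countable `T`-colored
structure `(A,a)` in `C̄` admits an embedding `ι : A ↪ U` with `u ∘ ι = a`. -/
def ColUniversal (C : Set (Bundled.{0} L.Structure)) {T : Type*} [L.Structure T]
    (Ub : Bundled.{0} L.Structure) (u : Ub →[L] T) : Prop :=
  ∀ (A : Bundled.{0} L.Structure) (a : A →[L] T), InBar C A →
    ∃ ι : A ↪[L] Ub, ∀ x, u (ι x) = a x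

/-- `(U,u)` is a homogeneous `T`-colored structure in `C̄`: any two embeddings of a finite
`T`-colored structure `(A,a)` of `C̄` into `(U,u)` differ by an automorphism of `(U,u)`. -/
def ColHomogeneous (C : Set (Bundled.{0} L.Structure)) {T : Type*} [L.Structure T]
    (Ub : Bundled.{0} L.Structure) (u : Ub →[L] T) : Prop :=
  ∀ (A : Bundled.{0} L.Structure) (a : A →[L] T), InBar C A → Finite A →
    ∀ ι₁ ι₂ : A ↪[L] Ub, (∀ x, u (ι₁ x) = a x) → (∀ x, u (ι₂ x) = a x) →
      ∃ f : Ub ≃[L] Ub, (∀ y, u (f y) = u y) ∧ ∀ x, f (ι₁ x) = ι₂ x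

lemma AgeIn.of_embedding {C : Set (Bundled.{0} L.Structure)} {M N : Type*} [L.Structure M]
    [L.Structure N] (hM : AgeIn C M) (e : N ↪[L] M) : AgeIn C N :=
  fun A hA ⟨f⟩ => hM A hA ⟨e.comp f⟩

lemma IsFraisseLimitOf.nonempty_embedding {C : Set (Bundled.{0} L.Structure)}
    {F : Bundled.{0} L.Structure} (hF : IsFraisseLimitOf C F) {M : Type*} [L.Structure M]
    (hM : AgeIn C M) {A : Type} [L.Structure A] [Finite A] (e : A ↪[L] M) :
    Nonempty (A ↪[L] F) :=
  (hF.2.1 ⟨A, _⟩ ‹_›).1 (hM ⟨A, _⟩ ‹_› ⟨e⟩)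

lemma autOligomorphic_of_finite (M : Type*) [L.Structure M] [Finite M] :
    AutOligomorphic L M :=
  fun _ => ⟨Set.univ, Set.finite_univ, fun x => ⟨x, trivial, .refl L M, rfl⟩⟩

lemma exists_finite_cover_of_finite_range {α β : Type*} {R : α → α → Prop} (κ : α → β)
    (hκ : (Set.range κ).Finite) (hR : ∀ x y, κ x = κ y → R x y) :
    ∃ S : Set α, S.Finite ∧ ∀ x, ∃ y ∈ S, R y x := by
  have := hκ.to_subtype
  choose σ hσ using fun b : Set.range κ => b.2
  exact ⟨Set.range σ, Set.finite_range σ,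
    fun x => ⟨σ ⟨κ x, x, rfl⟩, Set.mem_range_self _, hR _ _ (hσ _)⟩⟩

def Embedding.ofCompEq {A B F : Type*} [L.Structure A] [L.Structure B] [L.Structure F]
    (φ : A ↪[L] F) (φ' : B ↪[L] F) (h : A → B) (hh : ∀ a, φ' (h a) = φ a) :
    A ↪[L] B where
  toFun := h
  inj' a b hab := φ.injective (by rw [← hh, ← hh, hab])
  map_fun' f v := φ'.injective (by
    rw [hh, φ.map_fun, φ'.map_fun]
    exact congrArg _ (funext fun i => (hh (v i)).symm))
  map_rel' r v := by
    rw [← φ'.map_rel, ← φ.map_rel]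
    exact iff_of_eq (congrArg _ (funext fun i => hh (v i)))

section Tuples

open Substructure

variable {M : Type*} [L.Structure M] {n : ℕ}

def closureTuple (x : Fin n → M) : Fin n → closure L (Set.range x) :=
  fun i => ⟨x i, subset_closure (Set.mem_range_self i)⟩

variable [L.IsRelational]

lemma closureTuple_surjective (x : Fin n → M) : Function.Surjective (closureTuple (L := L) x) :=
  fun a => (mem_closure_iff_of_isRelational L _ _).1 a.2 |>.imp fun _ hi => Subtype.ext hi

instance finite_closure_range (x : Fin n → M) : Finite (closure L (Set.range x)) := by
  rw [← SetLike.coe_sort_coe, closure_eq_of_isRelational]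
  exact Set.finite_range x |>.to_subtype

lemma exists_embedding_of_closureTuple {F : Type*} [L.Structure F] {x y : Fin n → M}
    (φ : closure L (Set.range x) ↪[L] F) (φ' : closure L (Set.range y) ↪[L] F)
    (h : ∀ i, φ (closureTuple x i) = φ' (closureTuple y i)) :
    ∃ ψ : closure L (Set.range x) ↪[L] M, ∀ i, ψ (closureTuple x i) = y i := by
  choose idx hidx using closureTuple_surjective (L := L) x
  have hfac a : φ' (closureTuple y (idx a)) = φ a := by rw [← h, hidx]
  let ψ := Embedding.ofCompEq φ φ' _ hfac
  have hψ i : ψ (closureTuple x i) = closureTuple y i :=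
    φ'.injective ((hfac _).trans (h i))
  exact ⟨(closure L (Set.range y)).subtype.comp ψ, fun i => congrArg Subtype.val (hψ i)⟩

lemma ColHomogeneous.exists_sAut_of_embedding {C : Set (Bundled.{0} L.Structure)}
    {T : Type*} [L.Structure T] {Ub : Bundled.{0} L.Structure} {u : Ub →[L] T}
    (hhom : ColHomogeneous C Ub u) (hUb : AgeIn C Ub) {x y : Fin n → Ub}
    (ψ : closure L (Set.range x) ↪[L] Ub) (hψ : ∀ i, ψ (closureTuple x i) = y i)
    (hc : ∀ i, u (x i) = u (y i)) :
    ∃ f : Ub ≃[L] Ub, (∀ z, u (f z) = u z) ∧ ⇑f ∘ x = y := by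
  have hψu a : u (ψ a) = u a := by
    obtain ⟨i, rfl⟩ := closureTuple_surjective x a
    rw [hψ]
    exact (hc i).symm
  obtain ⟨f, hfu, hf⟩ := hhom ⟨closure L (Set.range x), inferInstance⟩
    (u.comp (closure L (Set.range x)).subtype.toHom)
    ⟨Finite.to_countable, hUb.of_embedding (subtype _)⟩ inferInstance (subtype _) ψ
    (fun _ => rfl) hψu
  exact ⟨f, hfu, funext fun i => (hf (closureTuple x i)).trans (hψ i)⟩

end Tuples

theorem sAut_oligomorphic_general (L : FirstOrder.Language.{u, v}) [L.IsRelational]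
    (C : Set (Bundled.{0} L.Structure))
    (T : Type) [L.Structure T]
    (Ub : Bundled.{0} L.Structure) (u : Ub →[L] T) (hUb : InBar C Ub)
    (hhom : ColHomogeneous C Ub u)
    (hlim : ∃ F : Bundled.{0} L.Structure, IsFraisseLimitOf C F ∧
      (Finite F ∨ AutOligomorphic L F))
    (hTfin : Finite T) :
    ∀ n : ℕ, ∃ S : Set (Fin n → Ub), S.Finite ∧
      ∀ x : Fin n → Ub, ∃ y ∈ S, ∃ f : Ub ≃[L] Ub,
        (∀ z, u (f z) = u z) ∧ ⇑f ∘ y = x := by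
  obtain ⟨F, hF, hFo⟩ := hlim
  have hFolig : AutOligomorphic L F := hFo.elim (fun _ => autOligomorphic_of_finite F) id
  intro n
  obtain ⟨SF, hSF, hSFcover⟩ := hFolig n
  let ε (x : Fin n → Ub) : Substructure.closure L (Set.range x) ↪[L] F :=
    (hF.nonempty_embedding hUb.2 (Substructure.subtype _)).some
  choose r hr g hg using fun x => hSFcover (ε x ∘ closureTuple x)
  simp only [funext_iff, Function.comp_apply] at hg
  refine exists_finite_cover_of_finite_range (fun x => (r x, u ∘ x))
    ((hSF.prod Set.finite_univ).subset (Set.range_subset_iff.2 fun x => ⟨hr x, trivial⟩)) ?_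
  intro y x hyx
  injection hyx with hrxy hcxy
  have hcompat i : g x ((g y).symm (ε y (closureTuple y i))) = ε x (closureTuple x i) := by
    rw [← hg y, Language.Equiv.symm_apply_apply, hrxy, hg x]
  obtain ⟨ψ, hψ⟩ := exists_embedding_of_closureTuple
    (((g x).comp (g y).symm).toEmbedding.comp (ε y)) (ε x) hcompat
  exact hhom.exists_sAut_of_embedding hUb.2 ψ hψ (congrFun hcxy)

/-- If the Fraïssé limit of `𝒞` is finite or has an oligomorphic
automorphism group and `T` is finite, then the strong automorphism group of a universal
homogeneous `T`-colored structure `(U,u)` in `𝒞̄` is oligomorphic. -/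
theorem sAut_oligomorphic (L : FirstOrder.Language.{u, v}) [L.IsRelational]
    (U C : Set (Bundled.{0} L.Structure))
    (hU : IsStrictFraisse U) (hC : IsFraisseClass C) (hfree : IsFreeIn C U)
    (T : Type) [L.Structure T] [Countable T] (hT : AgeIn U T)
    (Ub : Bundled.{0} L.Structure) (u : Ub →[L] T) (hUb : InBar C Ub)
    (huniv : ColUniversal C Ub u) (hhom : ColHomogeneous C Ub u)
    (hlim : ∃ F : Bundled.{0} L.Structure, IsFraisseLimitOf C F ∧
      (Finite F ∨ AutOligomorphic L F))
    (hTfin : Finite T) :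
    ∀ n : ℕ, ∃ S : Set (Fin n → Ub), S.Finite ∧
      ∀ x : Fin n → Ub, ∃ y ∈ S, ∃ f : Ub ≃[L] Ub,
        (∀ z, u (f z) = u z) ∧ ⇑f ∘ y = x :=
  sAut_oligomorphic_general L C T Ub u hUb hhom hlim hTfin

end Stmt8
end

section
/- Let (U,u) be a universal homogeneous T-colored structure in 𝒞̄. Then (U,u) is w-homogeneous: for every finite T-colored structure (A,a) in 𝒞̄ and all weak embeddings (f₁,g₁), (f₂,g₂) : (A,a) ↪ (U,u) there is a weak automorphism (f,g) of (U,u) with f ∘ f₁ = f₂ and g ∘ g₁ = g₂. Moreover, any two countable T-colored structures in 𝒞̄ that are universal and w-homogeneous are isomorphic. -/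
/-!
A `T`-colored structure `(M, c)` is encoded as the structure `Colored c` in the expansion of `L`
by one unary predicate for each color, the predicate `t` holding at `x` iff `c x = t`; colored
embeddings and isomorphisms are then exactly the embeddings and isomorphisms of the expansion.
Homogeneity of `(U, u)` becomes ultrahomogeneity of `Colored u`, and universality makes the ages
of any two universal colored structures coincide, so by the uniqueness of Fraïssé limits any two
universal homogeneous colored structures are isomorphic. W-homogeneity implies homogeneity, which
gives the second claim. For the first, with `g = g₂ ∘ g₁⁻¹` the structure `(U, g ∘ u)` is again
universal and homogeneous, hence isomorphic to `(U, u)` through some `k` with `u ∘ k = g ∘ u`, and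
an automorphism of `(U, u)` moves `k ∘ f₁` to `f₂`.
-/

open FirstOrder Language CategoryTheory

universe u v

namespace Stmt9

variable {L : FirstOrder.Language.{u, v}}

/-- The age of `M` is contained in the class `C` of finite structures. -/
def AgeIn (C : Set (Bundled.{0} L.Structure)) (M : Type*) [L.Structure M] : Prop :=
  ∀ A : Bundled.{0} L.Structure, Finite A → Nonempty (A ↪[L] M) → A ∈ C

/-- `A` is a countable structure whose age is contained in `C`, i.e. `A ∈ C̄`. -/
def InBar (C : Set (Bundled.{0} L.Structure)) (A : Bundled.{0} L.Structure) : Prop :=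
  Countable A ∧ AgeIn C A

/-- A Fraïssé class of finite structures: nonempty, isomorphism-closed, countably many
isomorphism types, hereditary, with the joint embedding and amalgamation properties. -/
structure IsFraisseClass (C : Set (Bundled.{0} L.Structure)) : Prop where
  nonempty : C.Nonempty
  finite : ∀ A ∈ C, Finite A
  isoInvariant : ∀ A B : Bundled.{0} L.Structure, Nonempty (A ≃[L] B) → (A ∈ C ↔ B ∈ C)
  countableTypes : ∃ S : Set (Bundled.{0} L.Structure), S.Countable ∧
    ∀ A ∈ C, ∃ B ∈ S, Nonempty (A ≃[L] B)
  hereditary : ∀ A ∈ C, ∀ B : Bundled.{0} L.Structure, Finite B → Nonempty (B ↪[L] A) → B ∈ C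
  jep : ∀ A ∈ C, ∀ B ∈ C, ∃ D ∈ C, Nonempty (A ↪[L] D) ∧ Nonempty (B ↪[L] D)
  amalgamation : ∀ A B₁ B₂ : Bundled.{0} L.Structure, A ∈ C → B₁ ∈ C → B₂ ∈ C →
    ∀ (f₁ : A ↪[L] B₁) (f₂ : A ↪[L] B₂),
      ∃ (D : Bundled.{0} L.Structure) (_ : D ∈ C) (g₁ : B₁ ↪[L] D) (g₂ : B₂ ↪[L] D),
        ∀ x, g₁ (f₁ x) = g₂ (f₂ x)

/-- `(P, g₁, g₂)` is a pushout of the pair of embeddings `(f₁, f₂)` in the category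
`(K̄, →)` of countable structures with age contained in `K`, with homomorphisms. -/
def IsPushoutIn (K : Set (Bundled.{0} L.Structure)) {A B₁ B₂ : Bundled.{0} L.Structure}
    (f₁ : A ↪[L] B₁) (f₂ : A ↪[L] B₂) (P : Bundled.{0} L.Structure)
    (g₁ : B₁ →[L] P) (g₂ : B₂ →[L] P) : Prop :=
  InBar K P ∧ (∀ x, g₁ (f₁ x) = g₂ (f₂ x)) ∧
  ∀ D : Bundled.{0} L.Structure, InBar K D →
    ∀ (h₁ : B₁ →[L] D) (h₂ : B₂ →[L] D), (∀ x, h₁ (f₁ x) = h₂ (f₂ x)) →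
      ∃! h : P →[L] D, h.comp g₁ = h₁ ∧ h.comp g₂ = h₂

/-- `(P, g₁, g₂)` is a coproduct of `B₁, B₂` in the category `(K̄, →)`. -/
def IsCoproductIn (K : Set (Bundled.{0} L.Structure)) (B₁ B₂ P : Bundled.{0} L.Structure)
    (g₁ : B₁ →[L] P) (g₂ : B₂ →[L] P) : Prop :=
  InBar K P ∧
  ∀ D : Bundled.{0} L.Structure, InBar K D → ∀ (h₁ : B₁ →[L] D) (h₂ : B₂ →[L] D),
    ∃! h : P →[L] D, h.comp g₁ = h₁ ∧ h.comp g₂ = h₂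

/-- A strict Fraïssé class: a Fraïssé class in which every pair of embeddings with common
domain has a pushout in `(K̄,→)`, and every pair of members has a coproduct in `(K̄,→)`. -/
def IsStrictFraisse (K : Set (Bundled.{0} L.Structure)) : Prop :=
  IsFraisseClass K ∧
  (∀ A B₁ B₂ : Bundled.{0} L.Structure, A ∈ K → B₁ ∈ K → B₂ ∈ K →
    ∀ (f₁ : A ↪[L] B₁) (f₂ : A ↪[L] B₂),
      ∃ (P : Bundled.{0} L.Structure) (g₁ : B₁ →[L] P) (g₂ : B₂ →[L] P),
        IsPushoutIn K f₁ f₂ P g₁ g₂) ∧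
  (∀ B₁ B₂ : Bundled.{0} L.Structure, B₁ ∈ K → B₂ ∈ K →
    ∃ (P : Bundled.{0} L.Structure) (g₁ : B₁ →[L] P) (g₂ : B₂ →[L] P),
      IsCoproductIn K B₁ B₂ P g₁ g₂)

/-- `C` is free in the strict Fraïssé class `K`: `C ⊆ K` and `C` is closed under the
canonical (pushout) amalgams and under finite coproducts taken in `(K̄,→)`. -/
def IsFreeIn (C K : Set (Bundled.{0} L.Structure)) : Prop :=
  C ⊆ K ∧
  (∀ A B₁ B₂ : Bundled.{0} L.Structure, A ∈ C → B₁ ∈ C → B₂ ∈ C →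
    ∀ (f₁ : A ↪[L] B₁) (f₂ : A ↪[L] B₂) (P : Bundled.{0} L.Structure)
      (g₁ : B₁ →[L] P) (g₂ : B₂ →[L] P), IsPushoutIn K f₁ f₂ P g₁ g₂ → P ∈ C) ∧
  (∀ B₁ B₂ : Bundled.{0} L.Structure, B₁ ∈ C → B₂ ∈ C →
    ∀ (P : Bundled.{0} L.Structure) (g₁ : B₁ →[L] P) (g₂ : B₂ →[L] P),
      IsCoproductIn K B₁ B₂ P g₁ g₂ → P ∈ C)

/-- `(U,u)` is a universal `T`-colored structure in `C̄`: every countable `T`-colored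
structure `(A,a)` in `C̄` admits an embedding `ι : A ↪ U` with `u ∘ ι = a`. -/
def ColUniversal (C : Set (Bundled.{0} L.Structure)) {T : Type*} [L.Structure T]
    (Ub : Bundled.{0} L.Structure) (u : Ub →[L] T) : Prop :=
  ∀ (A : Bundled.{0} L.Structure) (a : A →[L] T), InBar C A →
    ∃ ι : A ↪[L] Ub, ∀ x, u (ι x) = a x

/-- `(U,u)` is a homogeneous `T`-colored structure in `C̄`: any two embeddings of a finite
`T`-colored structure `(A,a)` of `C̄` into `(U,u)` differ by an automorphism of `(U,u)`. -/
def ColHomogeneous (C : Set (Bundled.{0} L.Structure)) {T : Type*} [L.Structure T]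
    (Ub : Bundled.{0} L.Structure) (u : Ub →[L] T) : Prop :=
  ∀ (A : Bundled.{0} L.Structure) (a : A →[L] T), InBar C A → Finite A →
    ∀ ι₁ ι₂ : A ↪[L] Ub, (∀ x, u (ι₁ x) = a x) → (∀ x, u (ι₂ x) = a x) →
      ∃ f : Ub ≃[L] Ub, (∀ y, u (f y) = u y) ∧ ∀ x, f (ι₁ x) = ι₂ x

/-- `(U,u)` is w-homogeneous: any two weak embeddings of a finite `T`-colored structure
`(A,a)` of `𝒞̄` into `(U,u)` differ by a weak automorphism of `(U,u)`. -/
def ColWHomogeneous (C : Set (Bundled.{0} L.Structure)) {T : Type*} [L.Structure T]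
    (Ub : Bundled.{0} L.Structure) (u : Ub →[L] T) : Prop :=
  ∀ (A : Bundled.{0} L.Structure) (a : A →[L] T), InBar C A → Finite A →
    ∀ (f₁ f₂ : A ↪[L] Ub) (g₁ g₂ : T ≃[L] T),
      (∀ x, u (f₁ x) = g₁ (a x)) → (∀ x, u (f₂ x) = g₂ (a x)) →
      ∃ (f : Ub ≃[L] Ub) (g : T ≃[L] T), (∀ y, u (f y) = g (u y)) ∧
        (∀ x, f (f₁ x) = f₂ x) ∧ ∀ t, g (g₁ t) = g₂ t

section

variable {C : Set (Bundled.{0} L.Structure)} {T : Type} [L.Structure T]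
  {U : Bundled.{0} L.Structure} {u : U →[L] T}

theorem ColUniversal.comp_equiv (huniv : ColUniversal C U u) (g : T ≃[L] T) :
    ColUniversal C U (g.toHom.comp u) := fun A a hA =>
  let ⟨ι, hι⟩ := huniv A (g.symm.toHom.comp a) hA
  ⟨ι, fun x => by simp [hι]⟩

theorem ColHomogeneous.comp_equiv (hhom : ColHomogeneous C U u) (g : T ≃[L] T) :
    ColHomogeneous C U (g.toHom.comp u) := by
  intro A a hA hAfin ι₁ ι₂ hι₁ hι₂
  obtain ⟨f, hf, hfι⟩ := hhom A (g.symm.toHom.comp a) hA hAfin ι₁ ι₂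
    (fun x => by simp [← hι₁]) (fun x => by simp [← hι₂])
  exact ⟨f, fun y => by simp [hf], hfι⟩

theorem ColWHomogeneous.colHomogeneous (hw : ColWHomogeneous C U u) : ColHomogeneous C U u := by
  intro A a hA hAfin ι₁ ι₂ hι₁ hι₂
  obtain ⟨f, g, hf, hfι, hg⟩ := hw A a hA hAfin ι₁ ι₂ (.refl L T) (.refl L T) hι₁ hι₂
  exact ⟨f, fun y => (hf y).trans (hg (u y)), hfι⟩

theorem InBar.substructure {V : Bundled.{0} L.Structure}
    (hV : InBar C V) (S : L.Substructure V) : InBar C (Bundled.of S) :=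
  have := hV.1
  ⟨inferInstanceAs (Countable (Subtype _)), fun _ hA ⟨e⟩ => hV.2 _ hA ⟨S.subtype.comp e⟩⟩

end

open Structure

def colorLanguage (T : Type) : FirstOrder.Language.{u, v} where
  Functions _ := PEmpty
  Relations
    | 1 => ULift T
    | _ => PEmpty

instance (T : Type) : (colorLanguage.{u, v} T).IsRelational :=
  fun _ => inferInstanceAs (IsEmpty PEmpty)

def Colored {M T : Type} (_c : M → T) : Type := M

namespace Colored

variable {T M N : Type} [L.Structure M] [L.Structure N] {cM : M → T} {cN : N → T}

instance (c : M → T) : L.Structure (Colored c) := inferInstanceAs (L.Structure M)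

instance (c : M → T) : (colorLanguage.{u, v} T).Structure (Colored c) where
  RelMap {n} r x := match n, r with
    | 1, t => c (x 0) = t.down

theorem relMap_iff (φ : Colored cM → Colored cN)
    (hφ : ∀ {n} (r : L.Relations n) x, RelMap r (φ ∘ x) ↔ RelMap r x)
    (hc : ∀ x, cN (φ x) = cM x) {n} (r : (L.sum (colorLanguage.{u, v} T)).Relations n)
    (x : Fin n → Colored cM) :
    RelMap r (φ ∘ x) ↔ RelMap r x := by
  rcases r with r | t
  · exact hφ r x
  · match n, t with
    | 1, t => exact congrArg (· = t.down) (hc (x 0)) |>.to_iff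

theorem color_apply (f : Colored cM ↪[L.sum (colorLanguage.{u, v} T)] Colored cN) (x : M) :
    cN (f x) = cM x :=
  (f.map_rel' (Sum.inr ⟨cM x⟩ : (L.sum (colorLanguage.{u, v} T)).Relations 1) ![x]).2 rfl

variable [L.IsRelational]

def embedding (f : M ↪[L] N) (hf : ∀ x, cN (f x) = cM x) :
    Colored cM ↪[L.sum (colorLanguage.{u, v} T)] Colored cN where
  toEmbedding := f.toEmbedding
  map_fun' F := isEmptyElim F
  map_rel' := relMap_iff f f.map_rel' hf

def equiv (f : M ≃[L] N) (hf : ∀ x, cN (f x) = cM x) :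
    Colored cM ≃[L.sum (colorLanguage.{u, v} T)] Colored cN where
  toEquiv := f.toEquiv
  map_fun' F := isEmptyElim F
  map_rel' := relMap_iff f f.map_rel' hf

def reductEmbedding (f : Colored cM ↪[L.sum (colorLanguage.{u, v} T)] Colored cN) : M ↪[L] N where
  toEmbedding := f.toEmbedding
  map_fun' F := isEmptyElim F
  map_rel' r := f.map_rel' (Sum.inl r)

def reductEquiv (f : Colored cM ≃[L.sum (colorLanguage.{u, v} T)] Colored cN) : M ≃[L] N where
  toEquiv := f.toEquiv
  map_fun' F := isEmptyElim F
  map_rel' r := f.map_rel' (Sum.inl r)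

def substructureEquiv (S : (L.sum (colorLanguage.{u, v} T)).Substructure (Colored cM)) :
    S ≃[L.sum (colorLanguage.{u, v} T)]
      Colored (fun x : LHom.sumInl.substructureReduct S => cM (x : Colored cM)) where
  toEquiv := _root_.Equiv.refl _
  map_fun' F := isEmptyElim F
  map_rel' {n} r x := by
    rcases r with r | t
    · rfl
    · match n, t with
      | 1, _ => rfl

end Colored

section

variable [L.IsRelational] {C : Set (Bundled.{0} L.Structure)} {T : Type} [L.Structure T]
  {U U₁ U₂ : Bundled.{0} L.Structure} {u : U →[L] T} {u₁ : U₁ →[L] T} {u₂ : U₂ →[L] T}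

theorem ColHomogeneous.isUltrahomogeneous (hU : InBar C U) (hhom : ColHomogeneous C U u) :
    (L.sum (colorLanguage.{u, v} T)).IsUltrahomogeneous (Colored u) := by
  intro S hS f
  let S₀ := LHom.sumInl.substructureReduct S
  obtain ⟨h, hcol, hh⟩ := hhom (Bundled.of S₀) (u.comp S₀.subtype.toHom) (hU.substructure S₀)
    hS.finite S₀.subtype
    (Colored.reductEmbedding (M := S₀) (f.comp (Colored.substructureEquiv S).symm.toEmbedding))
    (fun _ => rfl) (Colored.color_apply _)
  refine ⟨Colored.equiv h hcol, ?_⟩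
  ext x
  exact (hh ⟨x.1, x.2⟩).symm

theorem ColUniversal.age_colored_subset (h₁ : InBar C U₁) (hu₂ : ColUniversal C U₂ u₂) :
    (L.sum (colorLanguage.{u, v} T)).age (Colored u₁) ⊆
      (L.sum (colorLanguage.{u, v} T)).age (Colored u₂) :=
  let ⟨ι, hι⟩ := hu₂ U₁ u₁ h₁
  (Colored.embedding ι hι).age_subset_age

theorem exists_colored_equiv (h₁ : InBar C U₁) (hu₁ : ColUniversal C U₁ u₁)
    (hh₁ : ColHomogeneous C U₁ u₁) (h₂ : InBar C U₂) (hu₂ : ColUniversal C U₂ u₂)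
    (hh₂ : ColHomogeneous C U₂ u₂) :
    ∃ j : U₁ ≃[L] U₂, ∀ x, u₂ (j x) = u₁ x := by
  have : Countable (Colored u₁) := h₁.1
  have : Countable (Colored u₂) := h₂.1
  have hF₁ : IsFraisseLimit ((L.sum (colorLanguage.{u, v} T)).age (Colored u₁)) (Colored u₁) :=
    ⟨hh₁.isUltrahomogeneous h₁, rfl⟩
  have hF₂ : IsFraisseLimit ((L.sum (colorLanguage.{u, v} T)).age (Colored u₁)) (Colored u₂) :=
    ⟨hh₂.isUltrahomogeneous h₂, (hu₁.age_colored_subset h₂).antisymm (hu₂.age_colored_subset h₁)⟩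
  obtain ⟨F⟩ := hF₁.nonempty_equiv hF₂
  exact ⟨Colored.reductEquiv F, Colored.color_apply F.toEmbedding⟩

theorem ColHomogeneous.colWHomogeneous (hU : InBar C U) (huniv : ColUniversal C U u)
    (hhom : ColHomogeneous C U u) :
    ColWHomogeneous C U u := by
  intro A a hA hAfin f₁ f₂ g₁ g₂ hf₁ hf₂
  let g := g₂.comp g₁.symm
  obtain ⟨k, hk⟩ := exists_colored_equiv hU (huniv.comp_equiv g) (hhom.comp_equiv g) hU huniv hhom
  obtain ⟨h, hh, hhf⟩ := hhom A (g₂.toHom.comp a) hA hAfin (k.toEmbedding.comp f₁) f₂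
    (fun x => by simp [hk, hf₁, g]) hf₂
  exact ⟨h.comp k, g, fun y => by simp [hh, hk], hhf, fun t => by simp [g]⟩

end

theorem universal_homogeneous_wHomogeneous_general (L : FirstOrder.Language.{u, v}) [L.IsRelational]
    (C : Set (Bundled.{0} L.Structure))
    (T : Type) [L.Structure T]
    (Ub : Bundled.{0} L.Structure) (u : Ub →[L] T) (hUb : InBar C Ub)
    (huniv : ColUniversal C Ub u) (hhom : ColHomogeneous C Ub u) :
    ColWHomogeneous C Ub u ∧
    ∀ (U₁ : Bundled.{0} L.Structure) (u₁ : U₁ →[L] T)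
      (U₂ : Bundled.{0} L.Structure) (u₂ : U₂ →[L] T),
      InBar C U₁ → ColUniversal C U₁ u₁ → ColWHomogeneous C U₁ u₁ →
      InBar C U₂ → ColUniversal C U₂ u₂ → ColWHomogeneous C U₂ u₂ →
      ∃ j : U₁ ≃[L] U₂, ∀ x, u₂ (j x) = u₁ x :=
  ⟨hhom.colWHomogeneous hUb huniv, fun _ _ _ _ h₁ hu₁ hw₁ h₂ hu₂ hw₂ =>
    exists_colored_equiv h₁ hu₁ hw₁.colHomogeneous h₂ hu₂ hw₂.colHomogeneous⟩

/-- Every universal homogeneous `T`-colored structure in `𝒞̄` is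
w-homogeneous, and any two countable universal w-homogeneous `T`-colored structures in
`𝒞̄` are isomorphic. -/
theorem universal_homogeneous_wHomogeneous (L : FirstOrder.Language.{u, v}) [L.IsRelational]
    (U C : Set (Bundled.{0} L.Structure))
    (hU : IsStrictFraisse U) (hC : IsFraisseClass C) (hfree : IsFreeIn C U)
    (T : Type) [L.Structure T] [Countable T] (hT : AgeIn U T)
    (Ub : Bundled.{0} L.Structure) (u : Ub →[L] T) (hUb : InBar C Ub)
    (huniv : ColUniversal C Ub u) (hhom : ColHomogeneous C Ub u) :
    ColWHomogeneous C Ub u ∧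
    ∀ (U₁ : Bundled.{0} L.Structure) (u₁ : U₁ →[L] T)
      (U₂ : Bundled.{0} L.Structure) (u₂ : U₂ →[L] T),
      InBar C U₁ → ColUniversal C U₁ u₁ → ColWHomogeneous C U₁ u₁ →
      InBar C U₂ → ColUniversal C U₂ u₂ → ColWHomogeneous C U₂ u₂ →
      ∃ j : U₁ ≃[L] U₂, ∀ x, u₂ (j x) = u₁ x :=
  universal_homogeneous_wHomogeneous_general L C T Ub u hUb huniv hhom

end Stmt9
end

section
/- Let (U,u) be a universal homogeneous T-colored structure in 𝒞̄. If the Fraïssé limit of 𝒞 is finite or has an oligomorphic automorphism group, and if Aut(T) is oligomorphic, then the color automorphism group cAut(U,u) = { f ∈ Aut(U) : u ∘ f = g ∘ u for some g ∈ Aut(T) } is oligomorphic, i.e. for every n ≥ 1 it has only finitely many orbits on n-tuples of U. -/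
open FirstOrder Language CategoryTheory

universe u v

namespace Stmt10

/-- The automorphism group of `M` is oligomorphic: for every `n` there are only finitely
many orbits on `n`-tuples. -/
def AutOligomorphic (L : FirstOrder.Language.{u, v}) (M : Type*) [L.Structure M] : Prop :=
  ∀ n : ℕ, ∃ S : Set (Fin n → M), S.Finite ∧
    ∀ x : Fin n → M, ∃ y ∈ S, ∃ g : M ≃[L] M, ⇑g ∘ y = x

variable {L : FirstOrder.Language.{u, v}}

/-- The age of `M` is contained in the class `C` of finite structures. -/
def AgeIn (C : Set (Bundled.{0} L.Structure)) (M : Type*) [L.Structure M] : Prop :=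
  ∀ A : Bundled.{0} L.Structure, Finite A → Nonempty (A ↪[L] M) → A ∈ C

/-- `A` is a countable structure whose age is contained in `C`, i.e. `A ∈ C̄`. -/
def InBar (C : Set (Bundled.{0} L.Structure)) (A : Bundled.{0} L.Structure) : Prop :=
  Countable A ∧ AgeIn C A

/-- A Fraïssé class of finite structures: nonempty, isomorphism-closed, countably many
isomorphism types, hereditary, with the joint embedding and amalgamation properties. -/
structure IsFraisseClass (C : Set (Bundled.{0} L.Structure)) : Prop where
  nonempty : C.Nonempty
  finite : ∀ A ∈ C, Finite A
  isoInvariant : ∀ A B : Bundled.{0} L.Structure, Nonempty (A ≃[L] B) → (A ∈ C ↔ B ∈ C)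
  countableTypes : ∃ S : Set (Bundled.{0} L.Structure), S.Countable ∧
    ∀ A ∈ C, ∃ B ∈ S, Nonempty (A ≃[L] B)
  hereditary : ∀ A ∈ C, ∀ B : Bundled.{0} L.Structure, Finite B → Nonempty (B ↪[L] A) → B ∈ C
  jep : ∀ A ∈ C, ∀ B ∈ C, ∃ D ∈ C, Nonempty (A ↪[L] D) ∧ Nonempty (B ↪[L] D)
  amalgamation : ∀ A B₁ B₂ : Bundled.{0} L.Structure, A ∈ C → B₁ ∈ C → B₂ ∈ C →
    ∀ (f₁ : A ↪[L] B₁) (f₂ : A ↪[L] B₂),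
      ∃ (D : Bundled.{0} L.Structure) (_ : D ∈ C) (g₁ : B₁ ↪[L] D) (g₂ : B₂ ↪[L] D),
        ∀ x, g₁ (f₁ x) = g₂ (f₂ x)

/-- `(P, g₁, g₂)` is a pushout of the pair of embeddings `(f₁, f₂)` in the category
`(K̄, →)` of countable structures with age contained in `K`, with homomorphisms. -/
def IsPushoutIn (K : Set (Bundled.{0} L.Structure)) {A B₁ B₂ : Bundled.{0} L.Structure}
    (f₁ : A ↪[L] B₁) (f₂ : A ↪[L] B₂) (P : Bundled.{0} L.Structure)
    (g₁ : B₁ →[L] P) (g₂ : B₂ →[L] P) : Prop :=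
  InBar K P ∧ (∀ x, g₁ (f₁ x) = g₂ (f₂ x)) ∧
  ∀ D : Bundled.{0} L.Structure, InBar K D →
    ∀ (h₁ : B₁ →[L] D) (h₂ : B₂ →[L] D), (∀ x, h₁ (f₁ x) = h₂ (f₂ x)) →
      ∃! h : P →[L] D, h.comp g₁ = h₁ ∧ h.comp g₂ = h₂

/-- `(P, g₁, g₂)` is a coproduct of `B₁, B₂` in the category `(K̄, →)`. -/
def IsCoproductIn (K : Set (Bundled.{0} L.Structure)) (B₁ B₂ P : Bundled.{0} L.Structure)
    (g₁ : B₁ →[L] P) (g₂ : B₂ →[L] P) : Prop :=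
  InBar K P ∧
  ∀ D : Bundled.{0} L.Structure, InBar K D → ∀ (h₁ : B₁ →[L] D) (h₂ : B₂ →[L] D),
    ∃! h : P →[L] D, h.comp g₁ = h₁ ∧ h.comp g₂ = h₂

/-- A strict Fraïssé class: a Fraïssé class in which every pair of embeddings with common
domain has a pushout in `(K̄,→)`, and every pair of members has a coproduct in `(K̄,→)`. -/
def IsStrictFraisse (K : Set (Bundled.{0} L.Structure)) : Prop :=
  IsFraisseClass K ∧
  (∀ A B₁ B₂ : Bundled.{0} L.Structure, A ∈ K → B₁ ∈ K → B₂ ∈ K →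
    ∀ (f₁ : A ↪[L] B₁) (f₂ : A ↪[L] B₂),
      ∃ (P : Bundled.{0} L.Structure) (g₁ : B₁ →[L] P) (g₂ : B₂ →[L] P),
        IsPushoutIn K f₁ f₂ P g₁ g₂) ∧
  (∀ B₁ B₂ : Bundled.{0} L.Structure, B₁ ∈ K → B₂ ∈ K →
    ∃ (P : Bundled.{0} L.Structure) (g₁ : B₁ →[L] P) (g₂ : B₂ →[L] P),
      IsCoproductIn K B₁ B₂ P g₁ g₂)

/-- `C` is free in the strict Fraïssé class `K`: `C ⊆ K` and `C` is closed under the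
canonical (pushout) amalgams and under finite coproducts taken in `(K̄,→)`. -/
def IsFreeIn (C K : Set (Bundled.{0} L.Structure)) : Prop :=
  C ⊆ K ∧
  (∀ A B₁ B₂ : Bundled.{0} L.Structure, A ∈ C → B₁ ∈ C → B₂ ∈ C →
    ∀ (f₁ : A ↪[L] B₁) (f₂ : A ↪[L] B₂) (P : Bundled.{0} L.Structure)
      (g₁ : B₁ →[L] P) (g₂ : B₂ →[L] P), IsPushoutIn K f₁ f₂ P g₁ g₂ → P ∈ C) ∧
  (∀ B₁ B₂ : Bundled.{0} L.Structure, B₁ ∈ C → B₂ ∈ C →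
    ∀ (P : Bundled.{0} L.Structure) (g₁ : B₁ →[L] P) (g₂ : B₂ →[L] P),
      IsCoproductIn K B₁ B₂ P g₁ g₂ → P ∈ C)

/-- `F` is a Fraïssé limit of the class `C`: a countable structure whose age is exactly
`C` and which is ultrahomogeneous. -/
def IsFraisseLimitOf (C : Set (Bundled.{0} L.Structure)) (F : Bundled.{0} L.Structure) : Prop :=
  Countable F ∧
  (∀ A : Bundled.{0} L.Structure, Finite A → (A ∈ C ↔ Nonempty (A ↪[L] F))) ∧
  ∀ A : Bundled.{0} L.Structure, Finite A → ∀ f g : A ↪[L] F,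
    ∃ h : F ≃[L] F, ∀ x, h (f x) = g x

/-- `(U,u)` is a universal `T`-colored structure in `C̄`: every countable `T`-colored
structure `(A,a)` in `C̄` admits an embedding `ι : A ↪ U` with `u ∘ ι = a`. -/
def ColUniversal (C : Set (Bundled.{0} L.Structure)) {T : Type*} [L.Structure T]
    (Ub : Bundled.{0} L.Structure) (u : Ub →[L] T) : Prop :=
  ∀ (A : Bundled.{0} L.Structure) (a : A →[L] T), InBar C A →
    ∃ ι : A ↪[L] Ub, ∀ x, u (ι x) = a x

/-- `(U,u)` is a homogeneous `T`-colored structure in `C̄`: any two embeddings of a finite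
`T`-colored structure `(A,a)` of `C̄` into `(U,u)` differ by an automorphism of `(U,u)`. -/
def ColHomogeneous (C : Set (Bundled.{0} L.Structure)) {T : Type*} [L.Structure T]
    (Ub : Bundled.{0} L.Structure) (u : Ub →[L] T) : Prop :=
  ∀ (A : Bundled.{0} L.Structure) (a : A →[L] T), InBar C A → Finite A →
    ∀ ι₁ ι₂ : A ↪[L] Ub, (∀ x, u (ι₁ x) = a x) → (∀ x, u (ι₂ x) = a x) →
      ∃ f : Ub ≃[L] Ub, (∀ y, u (f y) = u y) ∧ ∀ x, f (ι₁ x) = ι₂ x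

/-! A `T`-colored structure `(M, c)` is the same thing as an expansion of `M` by one relation
symbol per tuple of colors, so color-preserving partial isomorphisms are partial isomorphisms of
the expansion. Universality and homogeneity of `(U, u)` let every finite color-preserving partial
isomorphism from a colored structure in `𝒞̄` into `(U, u)` be extended, so by back-and-forth any
two universal homogeneous colored structures in `𝒞̄` are isomorphic. Applied to `(U, g ∘ u)` and
`(U, u)`, this lifts every `g ∈ Aut(T)` to a color automorphism of `U`. With homogeneity, the
`cAut(U, u)`-orbit of a tuple `x` is then determined by the quantifier-free type of `x`, which is
realised in the Fraïssé limit `F` and so is one of finitely many `Aut(F)`-orbits, and by the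
`Aut(T)`-orbit of `u ∘ x`. -/

instance finite_closure_of_isRelational [L.IsRelational] {M : Type*} [L.Structure M]
    (s : Set M) [Finite s] : Finite (Substructure.closure L s) := by
  rwa [← SetLike.coe_sort_coe, Substructure.closure_eq_of_isRelational]

lemma InBar.substructure {C : Set (Bundled.{0} L.Structure)} {M : Bundled.{0} L.Structure}
    (hM : InBar C M) (A : L.Substructure M) : InBar C (Bundled.of A) :=
  have := hM.1
  ⟨inferInstanceAs (Countable A), fun B hB ⟨e⟩ => hM.2 B hB ⟨A.subtype.comp e⟩⟩

lemma AutOligomorphic.of_finite (M : Type*) [L.Structure M] [Finite M] : AutOligomorphic L M :=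
  fun _ => ⟨Set.univ, Set.finite_univ, fun x =>
    ⟨x, trivial, FirstOrder.Language.Equiv.refl L M, rfl⟩⟩

theorem exists_finite_representatives {α β : Type*} {B : Set β} (hB : B.Finite)
    (P : β → α → Prop) {R : α → α → Prop} (hcover : ∀ x, ∃ b ∈ B, P b x)
    (hR : ∀ b x y, P b x → P b y → R y x) : ∃ S : Set α, S.Finite ∧ ∀ x, ∃ y ∈ S, R y x := by
  let D := {b | b ∈ B ∧ ∃ x, P b x}
  have : Finite D := (hB.subset fun _ hb => hb.1).to_subtype
  refine ⟨Set.range fun b : D => b.2.2.choose, Set.finite_range _, fun x => ?_⟩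
  obtain ⟨b, hb, hbx⟩ := hcover x
  exact ⟨_, ⟨⟨b, hb, x, hbx⟩, rfl⟩, hR b _ _ hbx (Exists.choose_spec _)⟩

def colorLanguage (T : Type) : FirstOrder.Language.{0, 0} := ⟨fun _ => Empty, fun n => Fin n → T⟩

instance (T : Type) : (colorLanguage T).IsRelational := fun _ => inferInstanceAs (IsEmpty Empty)

abbrev _root_.FirstOrder.Language.withColors (L : FirstOrder.Language.{u, v}) (T : Type) :=
  L.sum (colorLanguage T)

def Colored {M T : Type} (_c : M → T) : Type := M

namespace Colored

variable {M N T : Type} [L.Structure M] [L.Structure N]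

instance (c : M → T) : L.Structure (Colored c) := ‹L.Structure M›

instance (c : M → T) : (colorLanguage T).Structure (Colored c) where
  RelMap p v := c ∘ v = p

variable [L.IsRelational] {c : M → T} {d : N → T}

section Substructure

variable {S : (L.withColors T).Substructure (Colored c)}

def reductEmbedding (f : S ↪[L.withColors T] Colored d) :
    LHom.sumInl.substructureReduct S ↪[L] N where
  toFun x := f ⟨x.1, x.2⟩
  inj' _ _ h := Subtype.ext (congrArg Subtype.val (f.injective h))
  map_fun' f := isEmptyElim f
  map_rel' r v := f.map_rel (Sum.inl r) (fun i => ⟨(v i).1, (v i).2⟩)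

lemma color_reductEmbedding (f : S ↪[L.withColors T] Colored d) (x) :
    d (reductEmbedding f x) = c x.1 :=
  congrFun ((f.map_rel (n := 1) (Sum.inr ![c x.1]) ![⟨x.1, x.2⟩]).2
    (funext fun i => by fin_cases i; rfl)) 0

def ofReductEmbedding (g : LHom.sumInl.substructureReduct S ↪[L] N)
    (hg : ∀ x, d (g x) = c x.1) : S ↪[L.withColors T] Colored d where
  toFun x := g ⟨x.1, x.2⟩
  inj' _ _ h := Subtype.ext (congrArg Subtype.val (g.injective h))
  map_fun' f := isEmptyElim f
  map_rel' {n} r v := by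
    cases r with
    | inl r => exact g.map_rel r (fun i => ⟨(v i).1, (v i).2⟩)
    | inr p => exact iff_of_eq (congrArg (· = p) (funext fun i => hg ⟨(v i).1, (v i).2⟩))

end Substructure

def reductEquiv (φ : Colored c ≃[L.withColors T] Colored d) : M ≃[L] N where
  toEquiv := φ.toEquiv
  map_fun' f := isEmptyElim f
  map_rel' r v := φ.map_rel (Sum.inl r) v

lemma color_reductEquiv (φ : Colored c ≃[L.withColors T] Colored d) (x : M) :
    d (reductEquiv φ x) = c x :=
  congrFun ((φ.map_rel (n := 1) (Sum.inr ![c x]) ![x]).2 (funext fun i => by fin_cases i; rfl)) 0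

end Colored

section ColoredBackAndForth

variable [L.IsRelational] {C : Set (Bundled.{0} L.Structure)} {T : Type} [L.Structure T]
  {M N : Bundled.{0} L.Structure}

theorem isExtensionPair_withColors (c : M →[L] T) (d : N →[L] T) (hM : InBar C M)
    (hN : ColUniversal C N d) (hNh : ColHomogeneous C N d) :
    (L.withColors T).IsExtensionPair (Colored ⇑c) (Colored ⇑d) := by
  rw [isExtensionPair_iff_exists_embedding_closure_singleton_sup]
  intro S hS f m
  let A := LHom.sumInl.substructureReduct (Substructure.closure (L.withColors T) {m} ⊔ S)
  have hSA : LHom.sumInl.substructureReduct S ≤ A :=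
    LHom.sumInl.substructureReduct.monotone le_sup_right
  obtain ⟨ι, hι⟩ := hN (Bundled.of A) (c.comp A.subtype.toHom) (hM.substructure A)
  obtain ⟨h, hh, hιf⟩ := hNh (Bundled.of (LHom.sumInl.substructureReduct S))
    (c.comp (LHom.sumInl.substructureReduct S).subtype.toHom) (hM.substructure _) hS.finite
    (ι.comp (Substructure.inclusion hSA)) (Colored.reductEmbedding f)
    (fun x => hι _) (Colored.color_reductEmbedding f)
  refine ⟨Colored.ofReductEmbedding (h.toEmbedding.comp ι) (fun x => (hh _).trans (hι x)), ?_⟩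
  ext x
  exact (hιf ⟨x.1, x.2⟩).symm

theorem exists_equiv_of_colUniversal_of_colHomogeneous {c : M →[L] T} {d : N →[L] T}
    (hM : InBar C M) (hMu : ColUniversal C M c) (hMh : ColHomogeneous C M c)
    (hN : InBar C N) (hNu : ColUniversal C N d) (hNh : ColHomogeneous C N d) :
    ∃ f : M ≃[L] N, ∀ x, d (f x) = c x := by
  have : Countable (Colored ⇑c) := hM.1
  have : Countable (Colored ⇑d) := hN.1
  -- `L` may have nullary relation symbols, so the empty partial map need not be an isomorphism;
  -- universality embeds the empty substructure of `(M, c)` into `(N, d)`.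
  let B := LHom.sumInl.substructureReduct (⊥ : (L.withColors T).Substructure (Colored ⇑c))
  obtain ⟨ι, hι⟩ := hNu (Bundled.of B) (c.comp B.subtype.toHom) (hM.substructure B)
  let e := Colored.ofReductEmbedding ι hι
  obtain ⟨φ, -⟩ := equiv_between_cg Structure.cg_of_countable Structure.cg_of_countable
    ⟨⟨⊥, e.toHom.range, e.equivRange⟩, Substructure.fg_bot⟩
    (isExtensionPair_withColors c d hM hNu hNh) (isExtensionPair_withColors d c hN hMu hMh)
  exact ⟨Colored.reductEquiv φ, Colored.color_reductEquiv φ⟩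

end ColoredBackAndForth

section ColorAutomorphisms

variable {C : Set (Bundled.{0} L.Structure)} {T T' : Type} [L.Structure T] [L.Structure T']
  {Ub : Bundled.{0} L.Structure} {u : Ub →[L] T}

lemma ColUniversal.equiv_comp (hu : ColUniversal C Ub u) (g : T ≃[L] T') :
    ColUniversal C Ub (g.toHom.comp u) := by
  intro A a hA
  obtain ⟨ι, hι⟩ := hu A (g.symm.toHom.comp a) hA
  exact ⟨ι, fun x => (congrArg g (hι x)).trans (g.apply_symm_apply (a x))⟩

lemma ColHomogeneous.equiv_comp (hu : ColHomogeneous C Ub u) (g : T ≃[L] T') :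
    ColHomogeneous C Ub (g.toHom.comp u) := by
  intro A a hA hfin ι₁ ι₂ h₁ h₂
  have hcol : ∀ ι : A ↪[L] Ub, (∀ x, g (u (ι x)) = a x) → ∀ x, u (ι x) = g.symm (a x) :=
    fun ι h x => by rw [← h, g.symm_apply_apply]
  obtain ⟨f, hf, hfι⟩ := hu A (g.symm.toHom.comp a) hA hfin ι₁ ι₂ (hcol ι₁ h₁) (hcol ι₂ h₂)
  exact ⟨f, fun y => congrArg g (hf y), hfι⟩

variable [L.IsRelational]

theorem exists_colorAut_lift (hUb : InBar C Ub) (hu : ColUniversal C Ub u)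
    (hh : ColHomogeneous C Ub u) (g : T ≃[L] T) : ∃ f : Ub ≃[L] Ub, ∀ z, u (f z) = g (u z) :=
  exists_equiv_of_colUniversal_of_colHomogeneous hUb (hu.equiv_comp g) (hh.equiv_comp g) hUb hu hh

theorem exists_colorAut_extending (hUb : InBar C Ub) (hu : ColUniversal C Ub u)
    (hh : ColHomogeneous C Ub u) (A : L.Substructure Ub) [Finite A] (e : A ↪[L] Ub)
    (g : T ≃[L] T) (he : ∀ x, u (e x) = g (u x)) :
    ∃ f : Ub ≃[L] Ub, (∀ z, u (f z) = g (u z)) ∧ ∀ x : A, f x = e x := by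
  obtain ⟨φ, hφ⟩ := exists_colorAut_lift hUb hu hh g
  have hφe : ∀ x, u (φ.symm (e x)) = u x := fun x =>
    g.injective ((hφ _).symm.trans (by rw [φ.apply_symm_apply, he]))
  obtain ⟨h, hh, hhe⟩ := hh (Bundled.of A) (u.comp A.subtype.toHom) (hUb.substructure A)
    ‹Finite A› A.subtype (φ.symm.toEmbedding.comp e) (fun _ => rfl) hφe
  refine ⟨φ.comp h, fun z => by rw [Equiv.comp_apply, hφ, hh], fun x => ?_⟩
  rw [Equiv.comp_apply]
  exact (congrArg φ (hhe x)).trans (φ.apply_symm_apply _)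

end ColorAutomorphisms

section Tuples

variable {M F : Type} [L.Structure M] [L.Structure F] {n : ℕ}

lemma mem_closure_range (x : Fin n → M) (i : Fin n) :
    x i ∈ Substructure.closure L (Set.range x) :=
  Substructure.subset_closure (Set.mem_range_self i)

variable (L) in
/-- `r` has the quantifier-free type of `x`. -/
def EmbedsTuple (x : Fin n → M) (r : Fin n → F) : Prop :=
  ∃ k : Substructure.closure L (Set.range x) ↪[L] F, ∀ i, k ⟨x i, mem_closure_range x i⟩ = r i

lemma EmbedsTuple.of_equiv_comp {x : Fin n → M} {r : Fin n → F} (g : F ≃[L] F)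
    (h : EmbedsTuple L x (⇑g ∘ r)) : EmbedsTuple L x r := by
  obtain ⟨k, hk⟩ := h
  exact ⟨g.symm.toEmbedding.comp k, fun i => by simp [hk]⟩

lemma EmbedsTuple.of_common [L.IsRelational] {x y : Fin n → M} {r : Fin n → F}
    (hx : EmbedsTuple L x r) (hy : EmbedsTuple L y r) : EmbedsTuple L y x := by
  obtain ⟨kx, hkx⟩ := hx
  obtain ⟨ky, hky⟩ := hy
  have hrange : ky.toHom.range ≤ kx.toHom.range := by
    rintro _ ⟨⟨z, hz⟩, rfl⟩
    obtain ⟨j, rfl⟩ := (Substructure.mem_closure_iff_of_isRelational L _ _).1 hz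
    exact ⟨⟨x j, mem_closure_range x j⟩, (hkx j).trans (hky j).symm⟩
  let e := kx.equivRange.symm.toEmbedding.comp (ky.codRestrict _ fun z => hrange ⟨z, rfl⟩)
  have hkxe : ∀ z, kx (e z) = ky z := fun z =>
    (kx.equivRange_apply _).symm.trans (congrArg Subtype.val (kx.equivRange.apply_symm_apply _))
  refine ⟨(Substructure.closure L (Set.range x)).subtype.comp e, fun i => ?_⟩
  exact congrArg Subtype.val (kx.injective ((hkxe _).trans ((hky i).trans (hkx i).symm)))

end Tuples

theorem exists_colorAut_of_embedsTuple [L.IsRelational] {C : Set (Bundled.{0} L.Structure)}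
    {T : Type} [L.Structure T] {Ub : Bundled.{0} L.Structure} {u : Ub →[L] T}
    (hUb : InBar C Ub) (hu : ColUniversal C Ub u) (hh : ColHomogeneous C Ub u) {n : ℕ}
    {x y : Fin n → Ub} (hyx : EmbedsTuple L y x) (g : T ≃[L] T)
    (hg : ∀ i, u (x i) = g (u (y i))) :
    ∃ (f : Ub ≃[L] Ub) (g : T ≃[L] T), (∀ z, u (f z) = g (u z)) ∧ ⇑f ∘ y = x := by
  obtain ⟨e, he⟩ := hyx
  have hcol : ∀ z, u (e z) = g (u z) := by
    rintro ⟨z, hz⟩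
    obtain ⟨j, rfl⟩ := (Substructure.mem_closure_iff_of_isRelational L _ _).1 hz
    rw [he j, hg j]
  obtain ⟨f, hf, hfe⟩ := exists_colorAut_extending hUb hu hh _ e g hcol
  exact ⟨f, g, hf, funext fun i => (hfe ⟨y i, mem_closure_range y i⟩).trans (he i)⟩

theorem cAut_oligomorphic_general (L : FirstOrder.Language.{u, v}) [L.IsRelational]
    (C : Set (Bundled.{0} L.Structure))
    (T : Type) [L.Structure T]
    (Ub : Bundled.{0} L.Structure) (u : Ub →[L] T) (hUb : InBar C Ub)
    (huniv : ColUniversal C Ub u) (hhom : ColHomogeneous C Ub u)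
    (hlim : ∃ F : Bundled.{0} L.Structure, IsFraisseLimitOf C F ∧
      (Finite F ∨ AutOligomorphic L F))
    (hTo : AutOligomorphic L T) :
    ∀ n : ℕ, ∃ S : Set (Fin n → Ub), S.Finite ∧
      ∀ x : Fin n → Ub, ∃ y ∈ S, ∃ (f : Ub ≃[L] Ub) (g : T ≃[L] T),
        (∀ z, u (f z) = g (u z)) ∧ ⇑f ∘ y = x := by
  intro n
  obtain ⟨F, hF, hFo⟩ := hlim
  obtain ⟨RF, hRF, hRFcover⟩ := hFo.elim (fun _ => AutOligomorphic.of_finite F) id n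
  obtain ⟨RT, hRT, hRTcover⟩ := hTo n
  refine exists_finite_representatives (hRF.prod hRT)
    (fun rc x => EmbedsTuple L x rc.1 ∧ ∃ g : T ≃[L] T, ⇑g ∘ rc.2 = ⇑u ∘ x) (fun x => ?_) ?_
  · let A := Substructure.closure L (Set.range x)
    obtain ⟨k⟩ := (hF.2.1 (Bundled.of A) (inferInstanceAs (Finite A))).1
      (hUb.2 (Bundled.of A) (inferInstanceAs (Finite A)) ⟨A.subtype⟩)
    obtain ⟨r, hr, gF, hgF⟩ := hRFcover fun i => k ⟨x i, mem_closure_range x i⟩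
    obtain ⟨c, hc, gT, hgT⟩ := hRTcover (u ∘ x)
    exact ⟨(r, c), ⟨hr, hc⟩, .of_equiv_comp gF (hgF ▸ ⟨k, fun _ => rfl⟩), gT, hgT⟩
  · rintro ⟨r, c⟩ x y ⟨hx, gx, hgx⟩ ⟨hy, gy, hgy⟩
    refine exists_colorAut_of_embedsTuple hUb huniv hhom (hx.of_common hy) (gx.comp gy.symm)
      fun i => ?_
    have hx_i : gx (c i) = u (x i) := congrFun hgx i
    have hy_i : gy (c i) = u (y i) := congrFun hgy i
    rw [Equiv.comp_apply, ← hx_i, ← hy_i, gy.symm_apply_apply]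

/-- If the Fraïssé limit of `𝒞` is finite or has an oligomorphic
automorphism group and `Aut(T)` is oligomorphic, then the color automorphism group of a
universal homogeneous `T`-colored structure `(U,u)` in `𝒞̄` is oligomorphic. -/
theorem cAut_oligomorphic (L : FirstOrder.Language.{u, v}) [L.IsRelational]
    (U C : Set (Bundled.{0} L.Structure))
    (hU : IsStrictFraisse U) (hC : IsFraisseClass C) (hfree : IsFreeIn C U)
    (T : Type) [L.Structure T] [Countable T] (hT : AgeIn U T)
    (Ub : Bundled.{0} L.Structure) (u : Ub →[L] T) (hUb : InBar C Ub)
    (huniv : ColUniversal C Ub u) (hhom : ColHomogeneous C Ub u)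
    (hlim : ∃ F : Bundled.{0} L.Structure, IsFraisseLimitOf C F ∧
      (Finite F ∨ AutOligomorphic L F))
    (hTo : AutOligomorphic L T) :
    ∀ n : ℕ, ∃ S : Set (Fin n → Ub), S.Finite ∧
      ∀ x : Fin n → Ub, ∃ y ∈ S, ∃ (f : Ub ≃[L] Ub) (g : T ≃[L] T),
        (∀ z, u (f z) = g (u z)) ∧ ⇑f ∘ y = x :=
  cAut_oligomorphic_general L C T Ub u hUb huniv hhom hlim hTo

end Stmt10
end

section
/- Suppose Age(T) ⊆ 𝒞, and let (U,u) be a universal homogeneous T-colored structure in 𝒞̄. Then for every automorphism f of the structure U the following are equivalent: (i) there exists an automorphism g of T with u ∘ f = g ∘ u (i.e. f is a color automorphism of (U,u)); (ii) f preserves the kernel of u in both directions, i.e. for all x, y ∈ U, u(x) = u(y) if and only if u(f(x)) = u(f(y)). -/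
/-!
Universality embeds `(T, id)` into `(U, u)`, giving an embedding `ι : T ↪ U` with `u ∘ ι = id`.
An automorphism `f` of `U` that preserves the kernel of `u` then descends to the homomorphism
`g = u ∘ f ∘ ι` of `T`, which satisfies `u ∘ f = g ∘ u`; the map obtained in the same way from
`f⁻¹` is its inverse, so `g` is an automorphism of `T`.
-/

open FirstOrder Language CategoryTheory

universe u v

namespace Stmt12

variable {L : FirstOrder.Language.{u, v}}

/-- The age of `M` is contained in the class `C` of finite structures. -/
def AgeIn (C : Set (Bundled.{0} L.Structure)) (M : Type*) [L.Structure M] : Prop :=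
  ∀ A : Bundled.{0} L.Structure, Finite A → Nonempty (A ↪[L] M) → A ∈ C

/-- `A` is a countable structure whose age is contained in `C`, i.e. `A ∈ C̄`. -/
def InBar (C : Set (Bundled.{0} L.Structure)) (A : Bundled.{0} L.Structure) : Prop :=
  Countable A ∧ AgeIn C A

/-- A Fraïssé class of finite structures: nonempty, isomorphism-closed, countably many
isomorphism types, hereditary, with the joint embedding and amalgamation properties. -/
structure IsFraisseClass (C : Set (Bundled.{0} L.Structure)) : Prop where
  nonempty : C.Nonempty
  finite : ∀ A ∈ C, Finite A
  isoInvariant : ∀ A B : Bundled.{0} L.Structure, Nonempty (A ≃[L] B) → (A ∈ C ↔ B ∈ C)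
  countableTypes : ∃ S : Set (Bundled.{0} L.Structure), S.Countable ∧
    ∀ A ∈ C, ∃ B ∈ S, Nonempty (A ≃[L] B)
  hereditary : ∀ A ∈ C, ∀ B : Bundled.{0} L.Structure, Finite B → Nonempty (B ↪[L] A) → B ∈ C
  jep : ∀ A ∈ C, ∀ B ∈ C, ∃ D ∈ C, Nonempty (A ↪[L] D) ∧ Nonempty (B ↪[L] D)
  amalgamation : ∀ A B₁ B₂ : Bundled.{0} L.Structure, A ∈ C → B₁ ∈ C → B₂ ∈ C →
    ∀ (f₁ : A ↪[L] B₁) (f₂ : A ↪[L] B₂),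
      ∃ (D : Bundled.{0} L.Structure) (_ : D ∈ C) (g₁ : B₁ ↪[L] D) (g₂ : B₂ ↪[L] D),
        ∀ x, g₁ (f₁ x) = g₂ (f₂ x)

/-- `(P, g₁, g₂)` is a pushout of the pair of embeddings `(f₁, f₂)` in the category
`(K̄, →)` of countable structures with age contained in `K`, with homomorphisms. -/
def IsPushoutIn (K : Set (Bundled.{0} L.Structure)) {A B₁ B₂ : Bundled.{0} L.Structure}
    (f₁ : A ↪[L] B₁) (f₂ : A ↪[L] B₂) (P : Bundled.{0} L.Structure)
    (g₁ : B₁ →[L] P) (g₂ : B₂ →[L] P) : Prop :=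
  InBar K P ∧ (∀ x, g₁ (f₁ x) = g₂ (f₂ x)) ∧
  ∀ D : Bundled.{0} L.Structure, InBar K D →
    ∀ (h₁ : B₁ →[L] D) (h₂ : B₂ →[L] D), (∀ x, h₁ (f₁ x) = h₂ (f₂ x)) →
      ∃! h : P →[L] D, h.comp g₁ = h₁ ∧ h.comp g₂ = h₂

/-- `(P, g₁, g₂)` is a coproduct of `B₁, B₂` in the category `(K̄, →)`. -/
def IsCoproductIn (K : Set (Bundled.{0} L.Structure)) (B₁ B₂ P : Bundled.{0} L.Structure)
    (g₁ : B₁ →[L] P) (g₂ : B₂ →[L] P) : Prop :=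
  InBar K P ∧
  ∀ D : Bundled.{0} L.Structure, InBar K D → ∀ (h₁ : B₁ →[L] D) (h₂ : B₂ →[L] D),
    ∃! h : P →[L] D, h.comp g₁ = h₁ ∧ h.comp g₂ = h₂

/-- A strict Fraïssé class: a Fraïssé class in which every pair of embeddings with common
domain has a pushout in `(K̄,→)`, and every pair of members has a coproduct in `(K̄,→)`. -/
def IsStrictFraisse (K : Set (Bundled.{0} L.Structure)) : Prop :=
  IsFraisseClass K ∧
  (∀ A B₁ B₂ : Bundled.{0} L.Structure, A ∈ K → B₁ ∈ K → B₂ ∈ K →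
    ∀ (f₁ : A ↪[L] B₁) (f₂ : A ↪[L] B₂),
      ∃ (P : Bundled.{0} L.Structure) (g₁ : B₁ →[L] P) (g₂ : B₂ →[L] P),
        IsPushoutIn K f₁ f₂ P g₁ g₂) ∧
  (∀ B₁ B₂ : Bundled.{0} L.Structure, B₁ ∈ K → B₂ ∈ K →
    ∃ (P : Bundled.{0} L.Structure) (g₁ : B₁ →[L] P) (g₂ : B₂ →[L] P),
      IsCoproductIn K B₁ B₂ P g₁ g₂)

/-- `C` is free in the strict Fraïssé class `K`: `C ⊆ K` and `C` is closed under the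
canonical (pushout) amalgams and under finite coproducts taken in `(K̄,→)`. -/
def IsFreeIn (C K : Set (Bundled.{0} L.Structure)) : Prop :=
  C ⊆ K ∧
  (∀ A B₁ B₂ : Bundled.{0} L.Structure, A ∈ C → B₁ ∈ C → B₂ ∈ C →
    ∀ (f₁ : A ↪[L] B₁) (f₂ : A ↪[L] B₂) (P : Bundled.{0} L.Structure)
      (g₁ : B₁ →[L] P) (g₂ : B₂ →[L] P), IsPushoutIn K f₁ f₂ P g₁ g₂ → P ∈ C) ∧
  (∀ B₁ B₂ : Bundled.{0} L.Structure, B₁ ∈ C → B₂ ∈ C →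
    ∀ (P : Bundled.{0} L.Structure) (g₁ : B₁ →[L] P) (g₂ : B₂ →[L] P),
      IsCoproductIn K B₁ B₂ P g₁ g₂ → P ∈ C)

/-- `(U,u)` is a universal `T`-colored structure in `C̄`: every countable `T`-colored
structure `(A,a)` in `C̄` admits an embedding `ι : A ↪ U` with `u ∘ ι = a`. -/
def ColUniversal (C : Set (Bundled.{0} L.Structure)) {T : Type*} [L.Structure T]
    (Ub : Bundled.{0} L.Structure) (u : Ub →[L] T) : Prop :=
  ∀ (A : Bundled.{0} L.Structure) (a : A →[L] T), InBar C A →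
    ∃ ι : A ↪[L] Ub, ∀ x, u (ι x) = a x

/-- `(U,u)` is a homogeneous `T`-colored structure in `C̄`: any two embeddings of a finite
`T`-colored structure `(A,a)` of `C̄` into `(U,u)` differ by an automorphism of `(U,u)`. -/
def ColHomogeneous (C : Set (Bundled.{0} L.Structure)) {T : Type*} [L.Structure T]
    (Ub : Bundled.{0} L.Structure) (u : Ub →[L] T) : Prop :=
  ∀ (A : Bundled.{0} L.Structure) (a : A →[L] T), InBar C A → Finite A →
    ∀ ι₁ ι₂ : A ↪[L] Ub, (∀ x, u (ι₁ x) = a x) → (∀ x, u (ι₂ x) = a x) →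
      ∃ f : Ub ≃[L] Ub, (∀ y, u (f y) = u y) ∧ ∀ x, f (ι₁ x) = ι₂ x

section

variable {M N : Type*} [L.Structure M] [L.Structure N]

def _root_.FirstOrder.Language.Hom.toEquivOfLeftInverse (g : M →[L] N) (g' : N →[L] M)
    (hl : Function.LeftInverse g' g) (hr : Function.RightInverse g' g) : M ≃[L] N where
  toFun := g
  invFun := g'
  left_inv := hl
  right_inv := hr
  map_fun' := g.map_fun'
  map_rel' r x :=
    ⟨fun h => by simpa only [Function.comp_def, hl _] using g'.map_rel r _ h, g.map_rel r x⟩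

section Recolor

variable {T : Type*} [L.Structure T]

def recolor (u : M →[L] T) (ι : T →[L] M) (f : M ≃[L] M) : T →[L] T :=
  u.comp (f.toHom.comp ι)

variable {u : M →[L] T} {ι : T →[L] M} {f : M ≃[L] M}

theorem recolor_apply_color (hι : ∀ t, u (ι t) = t)
    (hf : ∀ x y, u x = u y → u (f x) = u (f y)) (x : M) : recolor u ι f (u x) = u (f x) :=
  hf _ _ (hι _)

theorem recolor_leftInverse_recolor_symm (hι : ∀ t, u (ι t) = t)
    (hf : ∀ x y, u x = u y → u (f x) = u (f y)) :
    Function.LeftInverse (recolor u ι f) (recolor u ι f.symm) := fun t =>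
  calc recolor u ι f (u (f.symm (ι t))) = u (f (f.symm (ι t))) := recolor_apply_color hι hf _
    _ = t := by rw [f.apply_symm_apply, hι]

theorem kernel_preserving_of_colorAut {g : T ≃[L] T} (hg : ∀ x, u (f x) = g (u x)) (x y : M) :
    u x = u y ↔ u (f x) = u (f y) := by
  rw [hg, hg, g.injective.eq_iff]

theorem exists_colorAut_of_kernel_preserving (hι : ∀ t, u (ι t) = t)
    (hker : ∀ x y, u x = u y ↔ u (f x) = u (f y)) :
    ∃ g : T ≃[L] T, ∀ x, u (f x) = g (u x) := by
  have hf (x y : M) (h : u x = u y) : u (f x) = u (f y) := (hker x y).1 h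
  have hf_symm (x y : M) (h : u x = u y) : u (f.symm x) = u (f.symm y) :=
    (hker _ _).2 (by simpa only [f.apply_symm_apply] using h)
  exact ⟨(recolor u ι f).toEquivOfLeftInverse (recolor u ι f.symm)
    (recolor_leftInverse_recolor_symm (f := f.symm) hι hf_symm)
    (recolor_leftInverse_recolor_symm hι hf), fun x => (recolor_apply_color hι hf x).symm⟩

end Recolor

end

theorem colorAut_iff_kernel_preserving_general (L : FirstOrder.Language.{u, v})
    (C : Set (Bundled.{0} L.Structure))
    (T : Type) [L.Structure T] [Countable T] (hTC : AgeIn C T)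
    (Ub : Bundled.{0} L.Structure) (u : Ub →[L] T)
    (huniv : ColUniversal C Ub u) :
    ∀ f : Ub ≃[L] Ub,
      (∃ g : T ≃[L] T, ∀ x, u (f x) = g (u x)) ↔
      (∀ x y : Ub, u x = u y ↔ u (f x) = u (f y)) := by
  obtain ⟨ι, hι⟩ := huniv (Bundled.of T) (Hom.id L T) ⟨‹Countable T›, hTC⟩
  exact fun f => ⟨fun ⟨_, hg⟩ => kernel_preserving_of_colorAut hg,
    exists_colorAut_of_kernel_preserving (ι := ι.toHom) hι⟩

/-- If `Age(T) ⊆ 𝒞` and `(U,u)` is a universal homogeneous `T`-colored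
structure in `𝒞̄`, then an automorphism `f` of `U` is a color automorphism of `(U,u)` if
and only if it preserves the kernel of `u` in both directions. -/
theorem colorAut_iff_kernel_preserving (L : FirstOrder.Language.{u, v}) [L.IsRelational]
    (U C : Set (Bundled.{0} L.Structure))
    (hU : IsStrictFraisse U) (hC : IsFraisseClass C) (hfree : IsFreeIn C U)
    (T : Type) [L.Structure T] [Countable T] (hT : AgeIn U T) (hTC : AgeIn C T)
    (Ub : Bundled.{0} L.Structure) (u : Ub →[L] T) (hUb : InBar C Ub)
    (huniv : ColUniversal C Ub u) (hhom : ColHomogeneous C Ub u) :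
    ∀ f : Ub ≃[L] Ub,
      (∃ g : T ≃[L] T, ∀ x, u (f x) = g (u x)) ↔
      (∀ x y : Ub, u x = u y ↔ u (f x) = u (f y)) :=
  colorAut_iff_kernel_preserving_general L C T hTC Ub u huniv

end Stmt12
end

section
/- Let λ be a regular cardinal and let 𝔄, 𝔅, ℭ be categories such that 𝔄 and 𝔅 have colimits of all λ-chains and all morphisms of 𝔅 are monomorphisms. Let F : 𝔄 → ℭ be λ-continuous and let G : 𝔅 → ℭ preserve monomorphisms. If (A,f,B) is an object of the comma category (F↓G) such that A is λ-small in 𝔄 and B is λ-small in 𝔅, then (A,f,B) is λ-small in (F↓G). -/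
/-!
Since `F` preserves colimits of `λ`-chains, colimits of `λ`-chains in `F ↓ G` are computed
componentwise, so the two components of a map from `(A, f, B)` into such a colimit factor
through some stages of the chain, hence through a common later stage. The factored pair is a
morphism of `F ↓ G` because the square commutes after composing with `G` of the colimit leg,
which is mono.
-/

open CategoryTheory CategoryTheory.Limits

universe w u₁ v₁ u₂ v₂ u₃ v₃

namespace Stmt16

/-- An object `X` of a category `K` is `λ`-small if every morphism from `X` into the
colimit of a `λ`-chain factors through some object of the chain. -/
def IsLambdaSmall (c : Cardinal.{w}) {K : Type*} [Category K] (X : K) : Prop :=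
  ∀ (D : c.ord.ToType ⥤ K) (co : Cocone D), IsColimit co →
    ∀ h : X ⟶ co.pt, ∃ (j : c.ord.ToType) (g : X ⟶ D.obj j), g ≫ co.ι.app j = h

/-- A functor is `λ`-continuous if it preserves colimits of `λ`-chains. -/
def LambdaContinuous (c : Cardinal.{w}) {A : Type*} [Category A] {C : Type*} [Category C]
    (F : A ⥤ C) : Prop :=
  ∀ (D : c.ord.ToType ⥤ A) (co : Cocone D), IsColimit co →
    Nonempty (IsColimit (F.mapCocone co))

theorem LambdaContinuous.preservesColimitsOfShape {c : Cardinal.{w}} {A : Type u₁}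
    [Category.{v₁} A] {C : Type u₃} [Category.{v₃} C] {F : A ⥤ C}
    (hF : LambdaContinuous c F) : PreservesColimitsOfShape c.ord.ToType F :=
  ⟨fun {D} => ⟨fun {co} hco => hF D co hco⟩⟩

section Comma

variable {A : Type u₁} [Category.{v₁} A] {B : Type u₂} [Category.{v₂} B]
  {C : Type u₃} [Category.{v₃} C] {F : A ⥤ C} {G : B ⥤ C}

theorem Comma.exists_comp_eq_of_mono_map_right {X Y Z : Comma F G} (φ : Y ⟶ Z)
    [Mono (G.map φ.right)] (h : X ⟶ Z) (a : X.left ⟶ Y.left) (b : X.right ⟶ Y.right)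
    (ha : a ≫ φ.left = h.left) (hb : b ≫ φ.right = h.right) :
    ∃ g : X ⟶ Y, g ≫ φ = h := by
  have w : F.map a ≫ Y.hom = X.hom ≫ G.map b := by
    rw [← cancel_mono (G.map φ.right), Category.assoc, ← φ.w, ← F.map_comp_assoc, ha,
      Category.assoc, ← G.map_comp, hb]
    exact h.w
  exact ⟨⟨a, b, w⟩, CommaMorphism.ext ha hb⟩

theorem Comma.exists_comp_ι_eq {J : Type*} [Category J] [IsFilteredOrEmpty J]
    {D : J ⥤ Comma F G} (co : Cocone D) (hmono : ∀ j, Mono (G.map (co.ι.app j).right))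
    {X : Comma F G} (h : X ⟶ co.pt)
    (hleft : ∃ (j : J) (a : X.left ⟶ (D.obj j).left), a ≫ (co.ι.app j).left = h.left)
    (hright : ∃ (j : J) (b : X.right ⟶ (D.obj j).right), b ≫ (co.ι.app j).right = h.right) :
    ∃ (j : J) (g : X ⟶ D.obj j), g ≫ co.ι.app j = h := by
  obtain ⟨j₁, a, ha⟩ := hleft
  obtain ⟨j₂, b, hb⟩ := hright
  obtain ⟨j, f₁, f₂, -⟩ := IsFilteredOrEmpty.cocone_objs j₁ j₂
  have ha' : (a ≫ (D.map f₁).left) ≫ (co.ι.app j).left = h.left := by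
    rw [Category.assoc, ← Comma.comp_left, co.w, ha]
  have hb' : (b ≫ (D.map f₂).right) ≫ (co.ι.app j).right = h.right := by
    rw [Category.assoc, ← Comma.comp_right, co.w, hb]
  exact ⟨j, Comma.exists_comp_eq_of_mono_map_right _ h _ _ ha' hb'⟩

end Comma

theorem comma_lambdaSmall_general (c : Cardinal.{w})
    {A : Type u₁} [Category.{v₁} A] {B : Type u₂} [Category.{v₂} B]
    {C : Type u₃} [Category.{v₃} C]
    [HasColimitsOfShape c.ord.ToType A] [HasColimitsOfShape c.ord.ToType B]
    (hmonoB : ∀ {X Y : B} (f : X ⟶ Y), Mono f)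
    (F : A ⥤ C) (G : B ⥤ C)
    (hF : LambdaContinuous c F)
    (hG : ∀ {X Y : B} (f : X ⟶ Y), Mono f → Mono (G.map f))
    (X : Comma F G)
    (hleft : IsLambdaSmall c X.left) (hright : IsLambdaSmall c X.right) :
    IsLambdaSmall c X := by
  intro D co hco h
  have := hF.preservesColimitsOfShape
  exact Comma.exists_comp_ι_eq co (fun j => hG _ (hmonoB _)) h
    (hleft _ _ (isColimitOfPreserves (Comma.fst F G) hco) h.left)
    (hright _ _ (isColimitOfPreserves (Comma.snd F G) hco) h.right)

/-- Let `λ` be a regular cardinal, suppose `𝔄` and `𝔅` have colimits of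
`λ`-chains, all morphisms of `𝔅` are monomorphisms, `F : 𝔄 ⥤ ℭ` is `λ`-continuous and
`G : 𝔅 ⥤ ℭ` preserves monomorphisms. If `X = (A,f,B)` is an object of `(F↓G)` with `A`
`λ`-small in `𝔄` and `B` `λ`-small in `𝔅`, then `X` is `λ`-small in `(F↓G)`. -/
theorem comma_lambdaSmall (c : Cardinal.{w}) (hreg : c.IsRegular)
    {A : Type u₁} [Category.{v₁} A] {B : Type u₂} [Category.{v₂} B]
    {C : Type u₃} [Category.{v₃} C]
    [HasColimitsOfShape c.ord.ToType A] [HasColimitsOfShape c.ord.ToType B]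
    (hmonoB : ∀ {X Y : B} (f : X ⟶ Y), Mono f)
    (F : A ⥤ C) (G : B ⥤ C)
    (hF : LambdaContinuous c F)
    (hG : ∀ {X Y : B} (f : X ⟶ Y), Mono f → Mono (G.map f))
    (X : Comma F G)
    (hleft : IsLambdaSmall c X.left) (hright : IsLambdaSmall c X.right) :
    IsLambdaSmall c X :=
  comma_lambdaSmall_general c hmonoB F G hF hG X hleft hright

end Stmt16
end

section
/- Let G be an arbitrary subgroup of Aut(T) and let (U,u) be a G-universal, G-homogeneous T-colored structure in 𝒞̄. Then (U,u) is a universal, homogeneous T-colored structure in 𝒞̄: every countable T-colored structure in 𝒞̄ admits an embedding into (U,u), and for every finite T-colored structure (A,a) in 𝒞̄ and all embeddings ι₁, ι₂ : (A,a) ↪ (U,u) there is an automorphism f of (U,u) with f ∘ ι₁ = ι₂. -/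
/-!
A `G`-embedding `(f, g)` of `(A, a)` is turned into an embedding by composing `f` with an
automorphism of `U` covering `g⁻¹`; such lifts exist because the empty structure has a
`G`-embedding `(∅, g)` for every `g ∈ G`. Two embeddings are `G`-embeddings with trivial twist,
so the `G`-automorphism relating them has trivial twist as well.
-/

open FirstOrder Language CategoryTheory

universe u v

namespace Stmt19

variable {L : FirstOrder.Language.{u, v}}

/-- The age of `M` is contained in the class `C` of finite structures. -/
def AgeIn (C : Set (Bundled.{0} L.Structure)) (M : Type*) [L.Structure M] : Prop :=
  ∀ A : Bundled.{0} L.Structure, Finite A → Nonempty (A ↪[L] M) → A ∈ C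

/-- `A` is a countable structure whose age is contained in `C`, i.e. `A ∈ C̄`. -/
def InBar (C : Set (Bundled.{0} L.Structure)) (A : Bundled.{0} L.Structure) : Prop :=
  Countable A ∧ AgeIn C A

/-- A Fraïssé class of finite structures: nonempty, isomorphism-closed, countably many
isomorphism types, hereditary, with the joint embedding and amalgamation properties. -/
structure IsFraisseClass (C : Set (Bundled.{0} L.Structure)) : Prop where
  nonempty : C.Nonempty
  finite : ∀ A ∈ C, Finite A
  isoInvariant : ∀ A B : Bundled.{0} L.Structure, Nonempty (A ≃[L] B) → (A ∈ C ↔ B ∈ C)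
  countableTypes : ∃ S : Set (Bundled.{0} L.Structure), S.Countable ∧
    ∀ A ∈ C, ∃ B ∈ S, Nonempty (A ≃[L] B)
  hereditary : ∀ A ∈ C, ∀ B : Bundled.{0} L.Structure, Finite B → Nonempty (B ↪[L] A) → B ∈ C
  jep : ∀ A ∈ C, ∀ B ∈ C, ∃ D ∈ C, Nonempty (A ↪[L] D) ∧ Nonempty (B ↪[L] D)
  amalgamation : ∀ A B₁ B₂ : Bundled.{0} L.Structure, A ∈ C → B₁ ∈ C → B₂ ∈ C →
    ∀ (f₁ : A ↪[L] B₁) (f₂ : A ↪[L] B₂),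
      ∃ (D : Bundled.{0} L.Structure) (_ : D ∈ C) (g₁ : B₁ ↪[L] D) (g₂ : B₂ ↪[L] D),
        ∀ x, g₁ (f₁ x) = g₂ (f₂ x)

/-- `(P, g₁, g₂)` is a pushout of the pair of embeddings `(f₁, f₂)` in the category
`(K̄, →)` of countable structures with age contained in `K`, with homomorphisms. -/
def IsPushoutIn (K : Set (Bundled.{0} L.Structure)) {A B₁ B₂ : Bundled.{0} L.Structure}
    (f₁ : A ↪[L] B₁) (f₂ : A ↪[L] B₂) (P : Bundled.{0} L.Structure)
    (g₁ : B₁ →[L] P) (g₂ : B₂ →[L] P) : Prop :=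
  InBar K P ∧ (∀ x, g₁ (f₁ x) = g₂ (f₂ x)) ∧
  ∀ D : Bundled.{0} L.Structure, InBar K D →
    ∀ (h₁ : B₁ →[L] D) (h₂ : B₂ →[L] D), (∀ x, h₁ (f₁ x) = h₂ (f₂ x)) →
      ∃! h : P →[L] D, h.comp g₁ = h₁ ∧ h.comp g₂ = h₂

/-- `(P, g₁, g₂)` is a coproduct of `B₁, B₂` in the category `(K̄, →)`. -/
def IsCoproductIn (K : Set (Bundled.{0} L.Structure)) (B₁ B₂ P : Bundled.{0} L.Structure)
    (g₁ : B₁ →[L] P) (g₂ : B₂ →[L] P) : Prop :=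
  InBar K P ∧
  ∀ D : Bundled.{0} L.Structure, InBar K D → ∀ (h₁ : B₁ →[L] D) (h₂ : B₂ →[L] D),
    ∃! h : P →[L] D, h.comp g₁ = h₁ ∧ h.comp g₂ = h₂

/-- A strict Fraïssé class: a Fraïssé class in which every pair of embeddings with common
domain has a pushout in `(K̄,→)`, and every pair of members has a coproduct in `(K̄,→)`. -/
def IsStrictFraisse (K : Set (Bundled.{0} L.Structure)) : Prop :=
  IsFraisseClass K ∧
  (∀ A B₁ B₂ : Bundled.{0} L.Structure, A ∈ K → B₁ ∈ K → B₂ ∈ K →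
    ∀ (f₁ : A ↪[L] B₁) (f₂ : A ↪[L] B₂),
      ∃ (P : Bundled.{0} L.Structure) (g₁ : B₁ →[L] P) (g₂ : B₂ →[L] P),
        IsPushoutIn K f₁ f₂ P g₁ g₂) ∧
  (∀ B₁ B₂ : Bundled.{0} L.Structure, B₁ ∈ K → B₂ ∈ K →
    ∃ (P : Bundled.{0} L.Structure) (g₁ : B₁ →[L] P) (g₂ : B₂ →[L] P),
      IsCoproductIn K B₁ B₂ P g₁ g₂)

/-- `C` is free in the strict Fraïssé class `K`: `C ⊆ K` and `C` is closed under the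
canonical (pushout) amalgams and under finite coproducts taken in `(K̄,→)`. -/
def IsFreeIn (C K : Set (Bundled.{0} L.Structure)) : Prop :=
  C ⊆ K ∧
  (∀ A B₁ B₂ : Bundled.{0} L.Structure, A ∈ C → B₁ ∈ C → B₂ ∈ C →
    ∀ (f₁ : A ↪[L] B₁) (f₂ : A ↪[L] B₂) (P : Bundled.{0} L.Structure)
      (g₁ : B₁ →[L] P) (g₂ : B₂ →[L] P), IsPushoutIn K f₁ f₂ P g₁ g₂ → P ∈ C) ∧
  (∀ B₁ B₂ : Bundled.{0} L.Structure, B₁ ∈ C → B₂ ∈ C →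
    ∀ (P : Bundled.{0} L.Structure) (g₁ : B₁ →[L] P) (g₂ : B₂ →[L] P),
      IsCoproductIn K B₁ B₂ P g₁ g₂ → P ∈ C)

/-- `(U,u)` is a universal `T`-colored structure in `C̄`: every countable `T`-colored
structure `(A,a)` in `C̄` admits an embedding `ι : A ↪ U` with `u ∘ ι = a`. -/
def ColUniversal (C : Set (Bundled.{0} L.Structure)) {T : Type*} [L.Structure T]
    (Ub : Bundled.{0} L.Structure) (u : Ub →[L] T) : Prop :=
  ∀ (A : Bundled.{0} L.Structure) (a : A →[L] T), InBar C A →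
    ∃ ι : A ↪[L] Ub, ∀ x, u (ι x) = a x

/-- `(U,u)` is a homogeneous `T`-colored structure in `C̄`: any two embeddings of a finite
`T`-colored structure `(A,a)` of `C̄` into `(U,u)` differ by an automorphism of `(U,u)`. -/
def ColHomogeneous (C : Set (Bundled.{0} L.Structure)) {T : Type*} [L.Structure T]
    (Ub : Bundled.{0} L.Structure) (u : Ub →[L] T) : Prop :=
  ∀ (A : Bundled.{0} L.Structure) (a : A →[L] T), InBar C A → Finite A →
    ∀ ι₁ ι₂ : A ↪[L] Ub, (∀ x, u (ι₁ x) = a x) → (∀ x, u (ι₂ x) = a x) →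
      ∃ f : Ub ≃[L] Ub, (∀ y, u (f y) = u y) ∧ ∀ x, f (ι₁ x) = ι₂ x

/-- `G` is (the carrier of) a subgroup of `Aut(T)`. -/
def IsAutSubgroupSet (L : FirstOrder.Language.{u, v}) (T : Type*) [L.Structure T]
    (G : Set (T ≃[L] T)) : Prop :=
  Language.Equiv.refl L T ∈ G ∧ (∀ f ∈ G, ∀ g ∈ G, f.comp g ∈ G) ∧ ∀ f ∈ G, f.symm ∈ G

/-- `(U,u)` is a `G`-universal `T`-colored structure in `𝒞̄`: every countable `T`-colored
structure `(A,a)` in `𝒞̄` admits a `G`-embedding `(f,g)` into `(U,u)`. -/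
def GColUniversal (C : Set (Bundled.{0} L.Structure)) {T : Type*} [L.Structure T]
    (G : Set (T ≃[L] T)) (Ub : Bundled.{0} L.Structure) (u : Ub →[L] T) : Prop :=
  ∀ (A : Bundled.{0} L.Structure) (a : A →[L] T), InBar C A →
    ∃ (f : A ↪[L] Ub) (g : T ≃[L] T), g ∈ G ∧ ∀ x, u (f x) = g (a x)

/-- `(U,u)` is a `G`-homogeneous `T`-colored structure in `𝒞̄`: any two `G`-embeddings of a
finite `T`-colored structure `(A,a)` of `𝒞̄` into `(U,u)` differ by a `G`-automorphism. -/
def GColHomogeneous (C : Set (Bundled.{0} L.Structure)) {T : Type*} [L.Structure T]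
    (G : Set (T ≃[L] T)) (Ub : Bundled.{0} L.Structure) (u : Ub →[L] T) : Prop :=
  ∀ (A : Bundled.{0} L.Structure) (a : A →[L] T), InBar C A → Finite A →
    ∀ (f₁ f₂ : A ↪[L] Ub) (g₁ g₂ : T ≃[L] T), g₁ ∈ G → g₂ ∈ G →
      (∀ x, u (f₁ x) = g₁ (a x)) → (∀ x, u (f₂ x) = g₂ (a x)) →
      ∃ (f₃ : Ub ≃[L] Ub) (g₃ : T ≃[L] T), g₃ ∈ G ∧ (∀ y, u (f₃ y) = g₃ (u y)) ∧
        (∀ x, f₃ (f₁ x) = f₂ x) ∧ ∀ t, g₃ (g₁ t) = g₂ t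

theorem AgeIn.of_embedding {C : Set (Bundled.{0} L.Structure)} {M N : Type*} [L.Structure M]
    [L.Structure N] (hM : AgeIn C M) (e : N ↪[L] M) : AgeIn C N :=
  fun A hA ⟨i⟩ => hM A hA ⟨e.comp i⟩

theorem InBar.of_embedding {C : Set (Bundled.{0} L.Structure)} {A B : Bundled.{0} L.Structure}
    (hB : InBar C B) (e : A ↪[L] B) : InBar C A :=
  have := hB.1
  ⟨e.injective.countable, hB.2.of_embedding e⟩

section Colored

variable {C : Set (Bundled.{0} L.Structure)} {T : Type*} [L.Structure T] {G : Set (T ≃[L] T)}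
  {Ub : Bundled.{0} L.Structure} {u : Ub →[L] T}

theorem GColHomogeneous.exists_lift [IsEmpty L.Constants] (hhom : GColHomogeneous C G Ub u)
    (hUb : InBar C Ub) (hid : Language.Equiv.refl L T ∈ G) {g : T ≃[L] T} (hg : g ∈ G) :
    ∃ f : Ub ≃[L] Ub, ∀ y, u (f y) = g (u y) := by
  let E : Bundled.{0} L.Structure := ⟨(⊥ : L.Substructure Ub), inferInstance⟩
  let incl : E ↪[L] Ub := Substructure.subtype ⊥
  have hE : IsEmpty E := inferInstanceAs (IsEmpty (⊥ : L.Substructure Ub))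
  obtain ⟨f, g', -, hfg', -, hg'⟩ := hhom E (u.comp incl.toHom) (hUb.of_embedding incl)
    inferInstance incl incl _ g hid hg isEmptyElim isEmptyElim
  have hg'g : g' = g := Language.Equiv.ext hg'
  exact ⟨f, hg'g ▸ hfg'⟩

theorem GColUniversal.colUniversal [IsEmpty L.Constants] (huniv : GColUniversal C G Ub u)
    (hhom : GColHomogeneous C G Ub u) (hUb : InBar C Ub) (hG : IsAutSubgroupSet L T G) :
    ColUniversal C Ub u := by
  intro A a hA
  obtain ⟨f, g, hg, hfg⟩ := huniv A a hA
  obtain ⟨f', hf'⟩ := hhom.exists_lift hUb hG.1 (hG.2.2 g hg)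
  refine ⟨f'.toEmbedding.comp f, fun x => ?_⟩
  calc u (f' (f x)) = g.symm (u (f x)) := hf' (f x)
    _ = a x := by rw [hfg x, Language.Equiv.symm_apply_apply]

theorem GColHomogeneous.colHomogeneous (hhom : GColHomogeneous C G Ub u)
    (hid : Language.Equiv.refl L T ∈ G) : ColHomogeneous C Ub u := by
  intro A a hA hAfin ι₁ ι₂ h₁ h₂
  obtain ⟨f, g, -, hfg, hf, hg⟩ := hhom A a hA hAfin ι₁ ι₂ _ _ hid hid h₁ h₂
  have hg_id : g = Language.Equiv.refl L T := Language.Equiv.ext hg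
  exact ⟨f, fun y => by rw [hfg y, hg_id]; rfl, hf⟩

end Colored

theorem G_universal_homogeneous_is_universal_homogeneous_general (L : FirstOrder.Language.{u, v})
    [L.IsRelational] (C : Set (Bundled.{0} L.Structure))
    (T : Type) [L.Structure T]
    (G : Set (T ≃[L] T)) (hG : IsAutSubgroupSet L T G)
    (Ub : Bundled.{0} L.Structure) (u : Ub →[L] T) (hUb : InBar C Ub)
    (huniv : GColUniversal C G Ub u) (hhom : GColHomogeneous C G Ub u) :
    ColUniversal C Ub u ∧ ColHomogeneous C Ub u :=
  ⟨huniv.colUniversal hhom hUb hG, hhom.colHomogeneous hG.1⟩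

/-- For an arbitrary subgroup `G` of `Aut(T)`, every `G`-universal,
`G`-homogeneous `T`-colored structure in `𝒞̄` is universal and homogeneous. -/
theorem G_universal_homogeneous_is_universal_homogeneous (L : FirstOrder.Language.{u, v})
    [L.IsRelational] (U C : Set (Bundled.{0} L.Structure))
    (hU : IsStrictFraisse U) (hC : IsFraisseClass C) (hfree : IsFreeIn C U)
    (T : Type) [L.Structure T] [Countable T] (hT : AgeIn U T)
    (G : Set (T ≃[L] T)) (hG : IsAutSubgroupSet L T G)
    (Ub : Bundled.{0} L.Structure) (u : Ub →[L] T) (hUb : InBar C Ub)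
    (huniv : GColUniversal C G Ub u) (hhom : GColHomogeneous C G Ub u) :
    ColUniversal C Ub u ∧ ColHomogeneous C Ub u :=
  G_universal_homogeneous_is_universal_homogeneous_general L C T G hG Ub u hUb huniv hhom

end Stmt19
end
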